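/- arXiv:2604.19094 — 6 statements merged into one kernel-verified Lean document; each statement's English description precedes it below -/
import Mathlib

section
/- There exists a constant c > 0 (namely one may take any c < (log 2)/(4 log(1+√2)) ≈ 0.1966) such that for every ε > 0 there is N₀ with the property that for all N ≥ N₀, the number of integers m with 1 ≤ m ≤ N for which there exists a finite tree T with i(T) = m is at least N^{(log 2)/(4 log(1+√2)) − ε}. Equivalently, the lower growth exponent liminf_{N→∞} log|I_tree ∩ {1,…,N}| / log N of the set I_tree is at least (log 2)/(4 log(1+√2)). -/
/-- The number of independent sets of a simple graph `G`
(including the empty set). -/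
noncomputable def numIndep {V : Type*} (G : SimpleGraph V) : ℕ :=
  Nat.card {s : Set V // ∀ x ∈ s, ∀ y ∈ s, ¬ G.Adj x y}

/-- The set of positive integers realizable as the number of independent
sets of a (finite) tree. -/
def Itree : Set ℕ :=
  {m | ∃ (n : ℕ) (T : SimpleGraph (Fin n)), T.IsTree ∧ numIndep T = m}

/-!
Attaching a pendant vertex to a rooted tree acts linearly on the pair `(P, Q)` of counts of
independent sets avoiding and containing the root: making the new vertex the root gives
`(P + Q, P)`, keeping the old root gives `(2P, Q)`. Reading each bit of a string of length `k` as
a root move, followed by one extra leaf when the bit is set, gives `2^k` trees with pairwise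
distinct pairs: `Q < P < 2Q` right after a root move and `P > 2Q` after the extra leaf, so the
last bit can be read off the pair. Then `2k + 1` more leaves and one root move turn `(P, Q)` into
the single number `4^(k+1) P + Q < 16^(k+1)`, from which `(P, Q)` is recovered by division with
remainder. Hence `{1, …, N}` contains at least `N^(1/4) / 4` values `i(T)`, and
`log 2 / (4 log (1 + √2)) ≤ 1/4`.
-/

open SimpleGraph

lemma Nat.card_subtype_eq_card_and_add_card_and_not {α : Type*} [Finite α] (p q : α → Prop) :
    Nat.card {x // p x} = Nat.card {x // p x ∧ q x} + Nat.card {x // p x ∧ ¬ q x} := by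
  classical
  rw [← Nat.card_sum]
  exact Nat.card_congr ((Equiv.sumCompl fun x : {x // p x} => q x).symm.trans
    (Equiv.sumCongr (Equiv.subtypeSubtypeEquivSubtypeInter p q)
      (Equiv.subtypeSubtypeEquivSubtypeInter p fun x => ¬ q x)))

lemma Nat.card_subtype_set_fin_succ {n : ℕ} (Q : Prop → Set (Fin n) → Prop) :
    Nat.card {s : Set (Fin (n + 1)) // Q (Fin.last n ∈ s) (Fin.castSucc ⁻¹' s)} =
      Nat.card {t // Q False t} + Nat.card {t // Q True t} := by
  calc _ = Nat.card {p : Prop × Set (Fin n) // Q p.1 p.2} :=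
        Nat.card_congr <| (Fin.snocEquiv fun _ => Prop).symm.subtypeEquiv fun _ => Iff.rfl
    _ = ∑ b : Prop, Nat.card {t // Q b t} := by
        rw [Nat.card_congr (Equiv.subtypeProdEquivSigmaSubtype fun b t => Q b t), Nat.card_sigma]
    _ = _ := by
        rw [Fintype.univ_Prop, Finset.sum_pair (by simp), add_comm]

section IndepCount

variable {V : Type*}

noncomputable def numIndepMem (G : SimpleGraph V) (r : V) : ℕ :=
  Nat.card {s : Set V // G.IsIndepSet s ∧ r ∈ s}

noncomputable def numIndepNotMem (G : SimpleGraph V) (r : V) : ℕ :=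
  Nat.card {s : Set V // G.IsIndepSet s ∧ r ∉ s}

lemma numIndep_eq_card_isIndepSet (G : SimpleGraph V) :
    numIndep G = Nat.card {s : Set V // G.IsIndepSet s} :=
  Nat.card_congr <| Equiv.subtypeEquivRight fun _ =>
    ⟨fun h x hx y hy _ => h x hx y hy,
     fun h x hx y hy hxy => (eq_or_ne x y).elim (fun e => e ▸ G.irrefl) (h hx hy) hxy⟩

lemma numIndep_eq_numIndepNotMem_add_numIndepMem [Finite V] (G : SimpleGraph V) (r : V) :
    numIndep G = numIndepNotMem G r + numIndepMem G r := by
  rw [numIndep_eq_card_isIndepSet, add_comm,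
    Nat.card_subtype_eq_card_and_add_card_and_not _ (r ∈ ·), numIndepMem, numIndepNotMem]

lemma isIndepSet_sup_iff {G H : SimpleGraph V} {s : Set V} :
    (G ⊔ H).IsIndepSet s ↔ G.IsIndepSet s ∧ H.IsIndepSet s := by
  simp only [isIndepSet_iff, sup_adj, not_or]
  exact ⟨fun h => ⟨h.mono' fun _ _ h => h.1, h.mono' fun _ _ h => h.2⟩,
    fun h x hx y hy hxy => ⟨h.1 hx hy hxy, h.2 hx hy hxy⟩⟩

lemma isIndepSet_map_iff {W : Type*} (f : V ↪ W) {G : SimpleGraph V} {s : Set W} :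
    (G.map f).IsIndepSet s ↔ G.IsIndepSet (f ⁻¹' s) := by
  simp only [isIndepSet_iff, Set.Pairwise, map_adj, Set.mem_preimage]
  refine ⟨fun h x hx y hy hxy hadj => h hx hy (f.injective.ne hxy) ⟨x, y, hadj, rfl, rfl⟩, ?_⟩
  rintro h _ hx _ hy - ⟨x, y, hadj, rfl, rfl⟩
  exact h hx hy (G.ne_of_adj hadj) hadj

lemma isIndepSet_edge_iff {u v : V} (huv : u ≠ v) {s : Set V} :
    (edge u v).IsIndepSet s ↔ ¬ (u ∈ s ∧ v ∈ s) := by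
  simp only [isIndepSet_iff, Set.Pairwise, edge_adj]
  constructor
  · rintro h ⟨hu, hv⟩
    exact h hu hv huv ⟨Or.inl ⟨rfl, rfl⟩, huv⟩
  · rintro h x hx y hy - ⟨(⟨rfl, rfl⟩ | ⟨rfl, rfl⟩), -⟩
    exacts [h ⟨hx, hy⟩, h ⟨hy, hx⟩]

end IndepCount

section AddLeaf

variable {n : ℕ} (G : SimpleGraph (Fin n)) (a : Fin n)

def addLeaf : SimpleGraph (Fin (n + 1)) :=
  G.map Fin.castSuccEmb ⊔ edge (Fin.last n) a.castSucc

lemma isIndepSet_addLeaf_iff {s : Set (Fin (n + 1))} :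
    (addLeaf G a).IsIndepSet s ↔
      G.IsIndepSet (Fin.castSucc ⁻¹' s) ∧ (Fin.last n ∈ s → a ∉ Fin.castSucc ⁻¹' s) := by
  rw [addLeaf, isIndepSet_sup_iff, isIndepSet_map_iff,
    isIndepSet_edge_iff (Fin.castSucc_lt_last a).ne', not_and]
  rfl

lemma card_isIndepSet_addLeaf (R : Prop → Set (Fin n) → Prop) :
    Nat.card {s // (addLeaf G a).IsIndepSet s ∧ R (Fin.last n ∈ s) (Fin.castSucc ⁻¹' s)} =
      Nat.card {t // G.IsIndepSet t ∧ R False t} +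
        Nat.card {t // (G.IsIndepSet t ∧ a ∉ t) ∧ R True t} := by
  simp_rw [isIndepSet_addLeaf_iff]
  rw [Nat.card_subtype_set_fin_succ fun p t => (G.IsIndepSet t ∧ (p → a ∉ t)) ∧ R p t]
  simp only [false_imp_iff, and_true, true_imp_iff]

lemma numIndepNotMem_addLeaf_last :
    numIndepNotMem (addLeaf G a) (Fin.last n) = numIndep G := by
  rw [numIndepNotMem, card_isIndepSet_addLeaf G a fun p _ => ¬ p, numIndep_eq_card_isIndepSet]
  simp

lemma numIndepMem_addLeaf_last :
    numIndepMem (addLeaf G a) (Fin.last n) = numIndepNotMem G a := by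
  rw [numIndepMem, card_isIndepSet_addLeaf G a fun p _ => p, numIndepNotMem]
  simp

lemma numIndepNotMem_addLeaf_castSucc :
    numIndepNotMem (addLeaf G a) a.castSucc = 2 * numIndepNotMem G a := by
  refine (card_isIndepSet_addLeaf G a fun _ t => a ∉ t).trans ?_
  simp [numIndepNotMem, two_mul]

lemma numIndepMem_addLeaf_castSucc :
    numIndepMem (addLeaf G a) a.castSucc = numIndepMem G a := by
  refine (card_isIndepSet_addLeaf G a fun _ t => a ∈ t).trans ?_
  simp [numIndepMem, and_assoc]

lemma connected_addLeaf (hG : G.Connected) : (addLeaf G a).Connected := by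
  refine (connected_iff_exists_forall_reachable _).2 ⟨a.castSucc, fun z => ?_⟩
  induction z using Fin.lastCases with
  | last => exact (Adj.reachable (by simp [addLeaf, edge_adj, (Fin.castSucc_lt_last a).ne'])).symm
  | cast w =>
    exact ((hG.preconnected a w).map (Embedding.map Fin.castSuccEmb G).toHom).mono le_sup_left

lemma card_edgeSet_addLeaf : Nat.card (addLeaf G a).edgeSet = Nat.card G.edgeSet + 1 := by
  have hnew : s(Fin.last n, a.castSucc) ∉ Fin.castSuccEmb.sym2Map '' G.edgeSet := by
    rintro ⟨e, -, he⟩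
    induction e using Sym2.ind with
    | h x y =>
      rw [Function.Embedding.sym2Map_apply, Sym2.map_mk, Sym2.eq_iff] at he
      obtain ⟨h, -⟩ | ⟨-, h⟩ := he
      exacts [(Fin.castSucc_lt_last x).ne h, (Fin.castSucc_lt_last y).ne h]
  rw [addLeaf, edgeSet_sup, edgeSet_map, edgeSet_edge_of_ne (Fin.castSucc_lt_last a).ne',
    Set.union_singleton, Nat.card_coe_set_eq, Set.ncard_insert_of_notMem hnew,
    Set.ncard_image_of_injective _ Fin.castSuccEmb.sym2Map.injective,
    Nat.card_coe_set_eq]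

lemma SimpleGraph.IsTree.addLeaf (hG : G.IsTree) : (addLeaf G a).IsTree := by
  rw [isTree_iff_connected_and_card] at hG ⊢
  refine ⟨connected_addLeaf G a hG.1, ?_⟩
  rw [card_edgeSet_addLeaf, hG.2, Nat.card_fin, Nat.card_fin]

end AddLeaf

structure RootedFinTree where
  size : ℕ
  graph : SimpleGraph (Fin size)
  root : Fin size
  isTree : graph.IsTree

namespace RootedFinTree

def single : RootedFinTree :=
  ⟨1, ⊥, 0, ⟨connected_bot_iff.2 ⟨inferInstance, inferInstance⟩, isAcyclic_bot⟩⟩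

def extend (T : RootedFinTree) : RootedFinTree :=
  ⟨T.size + 1, addLeaf T.graph T.root, Fin.last T.size, T.isTree.addLeaf _ _⟩

def attachLeaf (T : RootedFinTree) : RootedFinTree :=
  ⟨T.size + 1, addLeaf T.graph T.root, T.root.castSucc, T.isTree.addLeaf _ _⟩

noncomputable def counts (T : RootedFinTree) : ℕ × ℕ :=
  (numIndepNotMem T.graph T.root, numIndepMem T.graph T.root)

lemma numIndep_eq_counts (T : RootedFinTree) : numIndep T.graph = T.counts.1 + T.counts.2 :=
  numIndep_eq_numIndepNotMem_add_numIndepMem _ _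

lemma counts_single : single.counts = (1, 1) := by
  have hempty (s : Set (Fin 1)) (h : (0 : Fin 1) ∉ s) : s = ∅ :=
    Set.eq_empty_of_forall_notMem fun z hz => h (Subsingleton.elim z 0 ▸ hz)
  have huniv (s : Set (Fin 1)) (h : (0 : Fin 1) ∈ s) : s = Set.univ :=
    Set.eq_univ_of_forall fun z => Subsingleton.elim 0 z ▸ h
  refine Prod.ext (Nat.card_eq_one_iff_exists.2 ⟨⟨∅, by simp, by simp⟩, ?_⟩)
    (Nat.card_eq_one_iff_exists.2 ⟨⟨Set.univ, fun _ _ _ _ _ h => h, trivial⟩, ?_⟩)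
  · exact fun s => Subtype.ext (hempty s.1 s.2.2)
  · exact fun s => Subtype.ext (huniv s.1 s.2.2)

lemma counts_extend (T : RootedFinTree) : T.extend.counts = (T.counts.1 + T.counts.2, T.counts.1) :=
  Prod.ext ((numIndepNotMem_addLeaf_last _ _).trans T.numIndep_eq_counts)
    (numIndepMem_addLeaf_last _ _)

lemma counts_attachLeaf (T : RootedFinTree) : T.attachLeaf.counts = (2 * T.counts.1, T.counts.2) :=
  Prod.ext (numIndepNotMem_addLeaf_castSucc _ _) (numIndepMem_addLeaf_castSucc _ _)

lemma counts_iterate_attachLeaf (T : RootedFinTree) (m : ℕ) :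
    (attachLeaf^[m] T).counts = (2 ^ m * T.counts.1, T.counts.2) := by
  induction m with
  | zero => simp
  | succ m ih => rw [Function.iterate_succ_apply', counts_attachLeaf, ih, pow_succ', mul_assoc]

lemma numIndep_mem_Itree (T : RootedFinTree) : numIndep T.graph ∈ Itree :=
  ⟨T.size, T.graph, T.isTree, rfl⟩

def encode : List Bool → RootedFinTree
  | [] => single.extend
  | b :: l => if b then (encode l).extend.attachLeaf else (encode l).extend

lemma counts_encode_nil : (encode []).counts = (2, 1) := by
  rw [encode, counts_extend, counts_single]; rfl

lemma counts_encode_cons (b : Bool) (l : List Bool) :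
    (encode (b :: l)).counts = ((if b then 2 else 1) * ((encode l).counts.1 + (encode l).counts.2),
      (encode l).counts.1) := by
  cases b <;> simp [encode, counts_extend, counts_attachLeaf]

lemma counts_encode_bounds (l : List Bool) :
    1 ≤ (encode l).counts.2 ∧ (encode l).counts.2 < (encode l).counts.1 ∧
      (encode l).counts.1 ≤ 2 * 4 ^ l.length := by
  induction l with
  | nil => simp [counts_encode_nil]
  | cons b l ih =>
    rw [counts_encode_cons, List.length_cons, pow_succ]
    cases b <;> simp only [Bool.false_eq_true, ↓reduceIte, one_mul] <;> omega

lemma encode_injective_of_counts_eq {l l' : List Bool} (hlen : l.length = l'.length)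
    (h : (encode l).counts = (encode l').counts) : l = l' := by
  induction l generalizing l' with
  | nil => exact (List.length_eq_zero_iff.1 hlen.symm).symm
  | cons b l ih =>
    obtain _ | ⟨b', l'⟩ := l'
    · simp at hlen
    have hl := (counts_encode_bounds l).2.1
    have hl' := (counts_encode_bounds l').2.1
    rw [counts_encode_cons, counts_encode_cons, Prod.mk.injEq] at h
    have hb : b = b' := by
      cases b <;> cases b' <;>
        simp only [Bool.false_eq_true, Bool.true_eq_false, ↓reduceIte, one_mul] at h ⊢ <;> omega
    subst hb
    have hcounts : (encode l).counts = (encode l').counts := by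
      refine Prod.ext h.2 ?_
      cases b <;> simp only [Bool.false_eq_true, ↓reduceIte, one_mul] at h <;> omega
    rw [ih (Nat.succ_injective hlen) hcounts]

def code (l : List Bool) : RootedFinTree :=
  (attachLeaf^[2 * l.length + 1] (encode l)).extend

lemma numIndep_code (l : List Bool) :
    numIndep (code l).graph = 4 ^ (l.length + 1) * (encode l).counts.1 + (encode l).counts.2 := by
  have h4 : (4 : ℕ) ^ (l.length + 1) = 2 * 2 ^ (2 * l.length + 1) := by
    rw [← pow_succ', show (4 : ℕ) = 2 ^ 2 from rfl, ← pow_mul]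
    ring_nf
  rw [code, numIndep_eq_counts, counts_extend, counts_iterate_attachLeaf, h4]
  ring

lemma numIndep_code_bounds (l : List Bool) :
    1 ≤ numIndep (code l).graph ∧ numIndep (code l).graph < 16 ^ (l.length + 1) := by
  obtain ⟨hq, hqp, hp⟩ := counts_encode_bounds l
  have hB : 1 ≤ 4 ^ l.length := Nat.one_le_pow _ _ (by norm_num)
  rw [numIndep_code]
  refine ⟨by omega, ?_⟩
  calc 4 ^ (l.length + 1) * (encode l).counts.1 + (encode l).counts.2
      < 4 ^ (l.length + 1) * ((encode l).counts.1 + 1) := by rw [pow_succ]; nlinarith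
    _ ≤ 4 ^ (l.length + 1) * 4 ^ (l.length + 1) := by gcongr; rw [pow_succ]; omega
    _ = 16 ^ (l.length + 1) := by rw [← mul_pow]; norm_num

lemma code_injective_of_numIndep_eq {l l' : List Bool} (hlen : l.length = l'.length)
    (h : numIndep (code l).graph = numIndep (code l').graph) : l = l' := by
  have hlt (l : List Bool) : (encode l).counts.2 < 4 ^ (l.length + 1) := by
    obtain ⟨-, hqp, hp⟩ := counts_encode_bounds l
    rw [pow_succ]
    omega
  have hdivmod {P Q : ℕ} (hQ : Q < 4 ^ (l.length + 1)) :=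
    (Nat.div_mod_unique (by positivity)).2 ⟨add_comm Q (4 ^ (l.length + 1) * P), hQ⟩
  have hl := hdivmod (P := (encode l).counts.1) (hlt l)
  have hl' := hdivmod (P := (encode l').counts.1) (hlen ▸ hlt l')
  rw [numIndep_code, numIndep_code, ← hlen] at h
  rw [h] at hl
  exact encode_injective_of_counts_eq hlen
    (Prod.ext (hl.1.symm.trans hl'.1) (hl.2.symm.trans hl'.2))

end RootedFinTree

lemma pow_two_le_ncard_Itree_inter_Icc {k N : ℕ} (hN : 16 ^ (k + 1) ≤ N) :
    2 ^ k ≤ (Itree ∩ Set.Icc 1 N).ncard := by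
  let value (b : Fin k → Bool) : ℕ := numIndep (RootedFinTree.code (List.ofFn b)).graph
  have hmaps (b : Fin k → Bool) : value b ∈ Itree ∩ Set.Icc 1 N := by
    obtain ⟨hpos, hlt⟩ := RootedFinTree.numIndep_code_bounds (List.ofFn b)
    rw [List.length_ofFn] at hlt
    exact ⟨RootedFinTree.numIndep_mem_Itree _, hpos, hlt.le.trans hN⟩
  have hinj : Set.InjOn value Set.univ := fun b _ b' _ h =>
    List.ofFn_injective (RootedFinTree.code_injective_of_numIndep_eq (by simp) h)
  calc 2 ^ k = (Set.univ : Set (Fin k → Bool)).ncard := by simp [Set.ncard_univ]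
    _ ≤ _ := Set.ncard_le_ncard_of_injOn value (fun b _ => hmaps b) hinj
        ((Set.finite_Icc 1 N).subset Set.inter_subset_right)

lemma exists_rpow_quarter_sub_le {f : ℕ → ℝ} (hf : ∀ k N : ℕ, 16 ^ (k + 1) ≤ N → 2 ^ k ≤ f N)
    {ε : ℝ} (hε : 0 < ε) : ∃ N₀ : ℕ, ∀ N ≥ N₀, (N : ℝ) ^ ((1 : ℝ) / 4 - ε) ≤ f N := by
  refine ⟨max 16 ⌈(4 : ℝ) ^ ε⁻¹⌉₊, fun N hN => ?_⟩
  have hlog : 1 ≤ Nat.log 16 N :=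
    Nat.le_log_of_pow_le (by norm_num) (by simpa using le_of_max_le_left hN)
  set k := Nat.log 16 N - 1
  have hk : k + 1 = Nat.log 16 N := by omega
  have hNpos : (0 : ℝ) < N := by exact_mod_cast (show 0 < N by omega)
  have hroot : (N : ℝ) ^ ((1 : ℝ) / 4) ≤ 4 * 2 ^ k := by
    have hlt : N < 16 ^ (k + 1 + 1) := hk ▸ Nat.lt_pow_succ_log_self (by norm_num) N
    calc (N : ℝ) ^ ((1 : ℝ) / 4) ≤ (((2 : ℝ) ^ (k + 2)) ^ 4) ^ ((1 : ℝ) / 4) := by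
          gcongr
          rw [← pow_mul, mul_comm, pow_mul]
          exact_mod_cast hlt.le
      _ = 4 * 2 ^ k := by
          rw [← Real.rpow_natCast _ 4, ← Real.rpow_mul (by positivity)]
          norm_num
          ring
  have heps : 4 ≤ (N : ℝ) ^ ε :=
    calc (4 : ℝ) = ((4 : ℝ) ^ ε⁻¹) ^ ε := by
          rw [← Real.rpow_mul (by norm_num), inv_mul_cancel₀ hε.ne', Real.rpow_one]
      _ ≤ (N : ℝ) ^ ε := by
          gcongr
          exact (Nat.le_ceil _).trans (by exact_mod_cast le_of_max_le_right hN)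
  calc (N : ℝ) ^ ((1 : ℝ) / 4 - ε) = (N : ℝ) ^ ((1 : ℝ) / 4) / (N : ℝ) ^ ε :=
        Real.rpow_sub hNpos _ _
    _ ≤ 4 * 2 ^ k / 4 := div_le_div₀ (by positivity) hroot (by norm_num) heps
    _ = 2 ^ k := by ring
    _ ≤ f N := hf k N (hk ▸ Nat.pow_log_le_self 16 (by omega))

lemma log_two_div_four_mul_log_one_add_sqrt_two_le :
    Real.log 2 / (4 * Real.log (1 + Real.sqrt 2)) ≤ 1 / 4 := by
  have hsqrt : 1 ≤ Real.sqrt 2 := Real.one_le_sqrt.2 one_le_two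
  have hlog : Real.log 2 ≤ Real.log (1 + Real.sqrt 2) := Real.log_le_log two_pos (by linarith)
  have hpos : 0 < Real.log (1 + Real.sqrt 2) := Real.log_pos (by linarith)
  rw [div_le_iff₀ (by positivity)]
  linarith

/-- The lower growth exponent of `Itree` is at least `log 2 / (4 log (1+√2))`:
for every `ε > 0`, for all sufficiently large `N`, the number of integers in
`{1,…,N}` realizable as the number of independent sets of a tree is at least
`N ^ (log 2 / (4 log (1+√2)) - ε)`. -/
theorem itree_lower_growth_exponent :
    ∀ ε : ℝ, 0 < ε → ∃ N₀ : ℕ, ∀ N : ℕ, N₀ ≤ N →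
      (N : ℝ) ^ (Real.log 2 / (4 * Real.log (1 + Real.sqrt 2)) - ε) ≤
        ((Itree ∩ Set.Icc 1 N).ncard : ℝ) := by
  intro ε hε
  obtain ⟨N₀, hN₀⟩ := exists_rpow_quarter_sub_le (f := fun N => ((Itree ∩ Set.Icc 1 N).ncard : ℝ))
    (fun k N hN => by exact_mod_cast pow_two_le_ncard_Itree_inter_Icc hN) hε
  refine ⟨max N₀ 1, fun N hN => le_trans ?_ (hN₀ N (le_of_max_le_left hN))⟩
  exact Real.rpow_le_rpow_of_exponent_le (by exact_mod_cast le_of_max_le_right hN)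
    (by linarith [log_two_div_four_mul_log_one_add_sqrt_two_le])
end

section
/- For every integer q ≥ 2 with q ∈ Q₅, there exists a finite connected simple graph G such that i(G) = q, the number of vertices of G is at most 5·log_φ q (where φ = (1+√5)/2), and the number of edges of G is at most 3 times the number of vertices of G. -/
/-- The continued fraction `[a₁,…,a_ℓ] = 1/(a₁+1/(a₂+⋯+1/a_ℓ))`. -/
def contFrac : List ℕ → ℚ
  | [] => 0
  | a :: rest => 1 / ((a : ℚ) + contFrac rest)

/-- `QSet A` is the set of positive integers `q` such that `q = 1` or there is
`1 ≤ p < q` coprime to `q` with `p/q = [a₁,…,a_ℓ]` for some `a₁,…,a_ℓ ≤ A`. -/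
def QSet (A : ℕ) : Set ℕ :=
  {q | q = 1 ∨ ∃ p : ℕ, 1 ≤ p ∧ p < q ∧ Nat.gcd p q = 1 ∧
    ∃ L : List ℕ, L ≠ [] ∧ (∀ a ∈ L, 1 ≤ a ∧ a ≤ A) ∧ contFrac L = (p : ℚ) / q}

/-!
If `p/q = [a₁,…,a_ℓ]` in lowest terms, then `q` is the continuant `K(a₁,…,a_ℓ)`, which satisfies
`K(a, b, …) = a·K(b, …) + K(…)`. This is mirrored by an independent-set recursion: glue a clique
on `a` vertices to a graph `G'` by joining one vertex `h` of the clique to the first block `D` of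
`G'`. Splitting the independent sets on whether they contain `h` gives
`i = a·i(G') + i(G' - D)`, and `i(G' - D)` is the continuant of the tail. Starting from a clique
on `a_ℓ - 1` vertices this gives a connected graph with `i(G) = q` on `Σ aᵢ - 1` vertices. For
`a ≤ 5` a clique on `a` vertices has `C(a,2) ≤ 2a` edges and `h` adds at most the size of the
next clique, so there are at most three edges per vertex. Finally `φ^(x+1) = φ^x + φ^(x-1)` shows
by induction that `K(a₁,…,a_ℓ) ≥ φ^((Σ aᵢ - 1)/5)`.
-/

open Set

namespace SimpleGraph

variable {V W : Type*}

/-- `i(G[U])`, the number of independent sets of the induced subgraph `G[U]`. -/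
noncomputable def numIndepWithin (G : SimpleGraph V) (U : Set V) : ℕ :=
  Nat.card {s : Set V // G.IsIndepSet s ∧ s ⊆ U}

theorem numIndep_eq_numIndepWithin_univ (G : SimpleGraph V) :
    numIndep G = G.numIndepWithin univ :=
  Nat.card_congr <| Equiv.subtypeEquivRight fun s =>
    (Iff.intro (fun h ⦃x⦄ hx ⦃y⦄ hy _ => h x hx y hy)
      fun h _ hx _ hy hxy => h hx hy (G.ne_of_adj hxy) hxy).trans
      (and_iff_left (subset_univ s)).symm

theorem numIndepWithin_empty (G : SimpleGraph V) : G.numIndepWithin ∅ = 1 := by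
  rw [numIndepWithin, Nat.card_eq_one_iff_unique]
  refine ⟨⟨fun s t => Subtype.ext ?_⟩, ⟨⟨∅, pairwise_empty _, empty_subset _⟩⟩⟩
  rw [subset_empty_iff.1 s.2.2, subset_empty_iff.1 t.2.2]

theorem numIndepWithin_eq_add [Finite V] (G : SimpleGraph V) {U : Set V} {v : V} (hv : v ∈ U) :
    G.numIndepWithin U =
      G.numIndepWithin (U \ {v}) + G.numIndepWithin (U \ insert v (G.neighborSet v)) := by
  classical
  rw [numIndepWithin, numIndepWithin, numIndepWithin, ← Nat.card_sum]
  refine Nat.card_congr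
    { toFun := fun s => if h : v ∈ s.1 then .inr ⟨s.1 \ {v}, ?_, ?_⟩ else .inl ⟨s.1, ?_⟩
      invFun := Sum.elim (fun t => ⟨t.1, t.2.1, t.2.2.trans sdiff_subset⟩)
        (fun t => ⟨insert v t.1, ?_, insert_subset hv (t.2.2.trans sdiff_subset)⟩)
      left_inv := ?_
      right_inv := ?_ }
  · exact s.2.1.mono sdiff_subset
  · rintro x ⟨hxs, hxv⟩
    refine ⟨s.2.2 hxs, ?_⟩
    rintro (rfl | hadj)
    · exact hxv rfl
    · exact s.2.1 h hxs (G.ne_of_adj hadj) hadj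
  · exact ⟨s.2.1, fun x hx => ⟨s.2.2 hx, fun hxv => h (hxv ▸ hx)⟩⟩
  · refine pairwise_insert.2 ⟨t.2.1, fun x hx _ => ⟨fun hadj => ?_, fun hadj => ?_⟩⟩
    · exact (t.2.2 hx).2 (Or.inr hadj)
    · exact (t.2.2 hx).2 (Or.inr hadj.symm)
  · rintro ⟨s, hs⟩
    by_cases h : v ∈ s <;> simp [h]
  · rintro (⟨t, ht⟩ | ⟨t, ht⟩)
    · have h : v ∉ t := fun hv => (ht.2 hv).2 rfl
      simp [h]
    · have h : v ∉ t := fun hv => (ht.2 hv).2 (mem_insert v _)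
      simp [h]

theorem numIndepWithin_sum (S : SimpleGraph (V ⊕ W)) {U₁ : Set V} {U₂ : Set W}
    (h : ∀ x ∈ U₁, ∀ y ∈ U₂, ¬S.Adj (.inl x) (.inr y)) :
    S.numIndepWithin (Sum.inl '' U₁ ∪ Sum.inr '' U₂) =
      (S.comap Sum.inl).numIndepWithin U₁ * (S.comap Sum.inr).numIndepWithin U₂ := by
  rw [numIndepWithin, numIndepWithin, numIndepWithin, ← Nat.card_prod]
  refine Nat.card_congr <|
    (sumEquiv.toEquiv.subtypeEquiv fun s => ?_).trans Equiv.subtypeProdEquivProd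
  have hsub : s ⊆ Sum.inl '' U₁ ∪ Sum.inr '' U₂ ↔ Sum.inl ⁻¹' s ⊆ U₁ ∧ Sum.inr ⁻¹' s ⊆ U₂ :=
    (sumEquiv.le_symm_apply (x := s) (y := (U₁, U₂))).trans Prod.mk_le_mk
  simp only [RelIso.coe_fn_toEquiv, sumEquiv_apply, hsub]
  constructor
  · rintro ⟨hs, hs₁, hs₂⟩
    exact ⟨⟨fun x hx y hy hxy => hs hx hy (Sum.inl_injective.ne hxy), hs₁⟩,
      fun x hx y hy hxy => hs hx hy (Sum.inr_injective.ne hxy), hs₂⟩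
  · rintro ⟨⟨hs₁, hU₁⟩, hs₂, hU₂⟩
    refine ⟨?_, hU₁, hU₂⟩
    rintro (x | x) hx (y | y) hy hxy hadj
    · exact hs₁ hx hy (fun e => hxy (congrArg _ e)) hadj
    · exact h x (hU₁ hx) y (hU₂ hy) hadj
    · exact h y (hU₁ hy) x (hU₂ hx) hadj.symm
    · exact hs₂ hx hy (fun e => hxy (congrArg _ e)) hadj

theorem top_numIndepWithin [Finite V] (U : Set V) :
    (⊤ : SimpleGraph V).numIndepWithin U = U.ncard + 1 := by
  induction U, U.toFinite using Set.Finite.induction_on with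
  | empty => simp [numIndepWithin_empty]
  | @insert v U hv _ ih =>
    have hN : insert v ((⊤ : SimpleGraph V).neighborSet v) = univ :=
      eq_univ_of_forall fun x => by simpa using em (x = v)
    rw [numIndepWithin_eq_add _ (mem_insert v U), insert_sdiff_self_of_notMem hv, hN, sdiff_univ,
      numIndepWithin_empty, ih, ncard_insert_of_notMem hv]

theorem Iso.numIndep_eq {G : SimpleGraph V} {H : SimpleGraph W} (e : G ≃g H) :
    numIndep G = numIndep H :=
  Nat.card_congr <| (Equiv.Set.congr e.toEquiv).subtypeEquiv fun s => by
    simp [Equiv.Set.congr, e.map_adj_iff]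

theorem card_edgeSet_le_choose_two [Finite V] (G : SimpleGraph V) :
    Nat.card G.edgeSet ≤ (Nat.card V).choose 2 := by
  classical
  have := Fintype.ofFinite V
  rw [Nat.card_eq_fintype_card, ← edgeFinset_card, Nat.card_eq_fintype_card]
  exact card_edgeFinset_le_card_choose_two

section AttachClique

variable {K : Type*} (h : K) (G : SimpleGraph W) (D : Set W)

def attachClique : SimpleGraph (K ⊕ W) :=
  (⊤ ⊕g G) ⊔ fromEdgeSet ((fun w => s(Sum.inl h, Sum.inr w)) '' D)

theorem attachClique_adj_inl_inr {k : K} {w : W} :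
    (attachClique h G D).Adj (.inl k) (.inr w) ↔ k = h ∧ w ∈ D := by
  simp [attachClique, eq_comm, and_comm]

theorem comap_inl_attachClique : (attachClique h G D).comap Sum.inl = ⊤ := by
  ext; simp [attachClique]

theorem comap_inr_attachClique : (attachClique h G D).comap Sum.inr = G := by
  ext; simp [attachClique]

theorem neighborSet_attachClique :
    (attachClique h G D).neighborSet (.inl h) = Sum.inl '' {h}ᶜ ∪ Sum.inr '' D := by
  ext (k | w) <;> simp [attachClique, eq_comm]

theorem numIndep_attachClique [Finite K] [Finite W] :
    numIndep (attachClique h G D) = Nat.card K * numIndep G + G.numIndepWithin Dᶜ := by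
  have hdel : (univ \ {.inl h} : Set (K ⊕ W)) = Sum.inl '' {h}ᶜ ∪ Sum.inr '' univ := by
    ext (k | w) <;> simp
  have hdelN : univ \ insert (.inl h) ((attachClique h G D).neighborSet (.inl h)) =
      Sum.inl '' ∅ ∪ Sum.inr '' Dᶜ := by
    ext (k | w) <;> simp [neighborSet_attachClique]
  have hcard : ({h}ᶜ : Set K).ncard + 1 = Nat.card K := by
    rw [← ncard_singleton h, add_comm, ncard_add_ncard_compl]
  rw [numIndep_eq_numIndepWithin_univ, numIndepWithin_eq_add _ (mem_univ (.inl h)), hdel, hdelN,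
    numIndepWithin_sum, numIndepWithin_sum, comap_inl_attachClique, comap_inr_attachClique,
    top_numIndepWithin, hcard, numIndepWithin_empty, one_mul, numIndep_eq_numIndepWithin_univ]
  · simp
  · intro k hk w _ hadj
    exact hk ((attachClique_adj_inl_inr h G D).1 hadj).1

theorem numIndepWithin_attachClique_compl_range_inl :
    (attachClique h G D).numIndepWithin (range Sum.inl)ᶜ = numIndep G := by
  have hW : (range Sum.inl)ᶜ = (Sum.inl '' ∅ ∪ Sum.inr '' univ : Set (K ⊕ W)) := by
    simp [compl_range_inl]
  rw [hW, numIndepWithin_sum _ (by simp), numIndepWithin_empty, one_mul, comap_inr_attachClique,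
    numIndep_eq_numIndepWithin_univ]

theorem card_edgeSet_attachClique_le [Finite K] [Finite W] :
    Nat.card (attachClique h G D).edgeSet ≤
      (Nat.card K).choose 2 + D.ncard + Nat.card G.edgeSet := by
  have hsum : Nat.card ((⊤ : SimpleGraph K) ⊕g G).edgeSet ≤
      (Nat.card K).choose 2 + Nat.card G.edgeSet := by
    rw [Nat.card_congr edgeSetSumEquiv, Nat.card_sum]
    exact Nat.add_le_add_right (card_edgeSet_le_choose_two ⊤) _
  have hstar : (fromEdgeSet ((fun w => s(Sum.inl h, Sum.inr w)) '' D)).edgeSet.ncard ≤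
      D.ncard := by
    rw [edgeSet_fromEdgeSet]
    exact (ncard_le_ncard sdiff_subset (toFinite _)).trans (ncard_image_le (toFinite D))
  rw [attachClique, edgeSet_sup, Nat.card_coe_set_eq]
  refine (ncard_union_le _ _).trans ?_
  rw [← Nat.card_coe_set_eq ((⊤ : SimpleGraph K) ⊕g G).edgeSet]
  omega

theorem attachClique_reachable_inl (hD : ∀ w, ∃ d ∈ D, G.Reachable w d) (x : K ⊕ W) :
    (attachClique h G D).Reachable x (.inl h) := by
  rcases x with k | w
  · by_cases hk : k = h
    · rw [hk]
    · exact Adj.reachable (by simpa [attachClique] using hk)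
  · obtain ⟨d, hd, hwd⟩ := hD w
    have hwd' : (attachClique h G D).Reachable (.inr w) (.inr d) :=
      hwd.map ((Hom.ofLE le_sup_left).comp Embedding.sumInr.toHom)
    exact hwd'.trans (Adj.reachable ((attachClique_adj_inl_inr h G D).2 ⟨rfl, hd⟩).symm)

theorem attachClique_connected (hD : ∀ w, ∃ d ∈ D, G.Reachable w d) :
    (attachClique h G D).Connected :=
  (connected_iff_exists_forall_reachable _).2
    ⟨.inl h, fun x => (attachClique_reachable_inl h G D hD x).symm⟩

end AttachClique

end SimpleGraph

def continuant : List ℕ → ℕ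
  | [] => 1
  | [a] => a
  | a :: b :: M => a * continuant (b :: M) + continuant M

theorem continuant_pos : ∀ {L : List ℕ}, (∀ a ∈ L, 1 ≤ a) → 0 < continuant L
  | [], _ => Nat.one_pos
  | [a], h => h a (List.mem_singleton_self a)
  | a :: b :: M, h => by
    have := continuant_pos (L := b :: M) fun x hx => h x (List.mem_cons_of_mem a hx)
    have := h a List.mem_cons_self
    rw [continuant]
    positivity

theorem coprime_continuant_cons : ∀ (a : ℕ) (M : List ℕ),
    Nat.Coprime (continuant M) (continuant (a :: M))
  | _, [] => Nat.coprime_one_left _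
  | a, b :: M => by
    rw [continuant, Nat.coprime_mul_right_add_right]
    exact (coprime_continuant_cons b M).symm

theorem contFrac_cons_eq : ∀ {a : ℕ} {M : List ℕ}, (∀ x ∈ a :: M, 1 ≤ x) →
    contFrac (a :: M) = continuant M / continuant (a :: M)
  | a, [], _ => by simp [contFrac, continuant]
  | a, b :: M, h => by
    have hbM := continuant_pos (L := b :: M) fun x hx => h x (List.mem_cons_of_mem a hx)
    rw [contFrac, contFrac_cons_eq fun x hx => h x (List.mem_cons_of_mem a hx), continuant]
    push_cast
    field_simp

theorem Rat.den_natCast_div_natCast_of_coprime {m n : ℕ} (hn : 0 < n) (h : Nat.Coprime m n) :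
    ((m : ℚ) / n).den = n := by
  have := Rat.den_div_eq_of_coprime (a := m) (b := n) (by exact_mod_cast hn) h
  rw [Int.cast_natCast, Int.cast_natCast] at this
  exact_mod_cast this

theorem continuant_eq_of_contFrac_eq {a : ℕ} {M : List ℕ} {p q : ℕ} (hM : ∀ x ∈ a :: M, 1 ≤ x)
    (hq : 0 < q) (hpq : Nat.Coprime p q) (h : contFrac (a :: M) = p / q) :
    continuant (a :: M) = q := by
  rw [contFrac_cons_eq hM] at h
  have := congrArg Rat.den h
  rwa [Rat.den_natCast_div_natCast_of_coprime hq hpq,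
    Rat.den_natCast_div_natCast_of_coprime (continuant_pos hM)
      (coprime_continuant_cons a M)] at this

open Real
open scoped goldenRatio

theorem goldenRatio_rpow_add_one (x : ℝ) : φ ^ (x + 1) = φ ^ x + φ ^ (x - 1) := by
  have h : x + 1 = x - 1 + 2 := by ring
  rw [h, rpow_add goldenRatio_pos, rpow_two, goldenRatio_sq, mul_add, mul_one,
    ← rpow_add_one goldenRatio_ne_zero, sub_add_cancel, add_comm]

theorem goldenRatio_rpow_le_self {x : ℝ} (hx : x ≤ 1) : φ ^ x ≤ φ :=
  (rpow_le_rpow_of_exponent_le one_lt_goldenRatio.le hx).trans_eq (rpow_one φ)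

theorem goldenRatio_rpow_le_add {A b : ℕ} {t K₁ K₂ : ℝ} (hA : 1 ≤ A) (hb : b ≤ A)
    (h₁ : φ ^ ((b + t - 1) / A) ≤ K₁) (h₂ : φ ^ ((t - 1) / A) ≤ K₂) :
    φ ^ ((b + t) / A) ≤ K₁ + K₂ := by
  have hA' : (1 : ℝ) ≤ A := by exact_mod_cast hA
  have hb' : (b : ℝ) ≤ A := by exact_mod_cast hb
  have hApos : (0 : ℝ) < A := by positivity
  set x := (b + t - 1) / A
  calc φ ^ ((b + t) / A) ≤ φ ^ (x + 1) := by
        refine rpow_le_rpow_of_exponent_le one_lt_goldenRatio.le ?_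
        rw [div_add_one hApos.ne', div_le_div_iff_of_pos_right hApos]
        linarith
    _ = φ ^ x + φ ^ (x - 1) := goldenRatio_rpow_add_one x
    _ ≤ K₁ + K₂ := by
        refine add_le_add h₁ ((rpow_le_rpow_of_exponent_le one_lt_goldenRatio.le ?_).trans h₂)
        rw [div_sub_one hApos.ne', div_le_div_iff_of_pos_right hApos]
        linarith

theorem goldenRatio_rpow_le_continuant {A : ℕ} :
    ∀ {L : List ℕ}, (∀ a ∈ L, 1 ≤ a ∧ a ≤ A) → φ ^ (((L.sum : ℝ) - 1) / A) ≤ continuant L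
  | [], _ => by
    rw [continuant, Nat.cast_one]
    refine rpow_le_one_of_one_le_of_nonpos one_lt_goldenRatio.le ?_
    exact div_nonpos_of_nonpos_of_nonneg (by simp) (Nat.cast_nonneg A)
  | [a], h => by
    obtain ⟨ha1, haA⟩ := h a (List.mem_singleton_self a)
    simp only [List.sum_singleton, continuant]
    rcases ha1.eq_or_lt with rfl | ha2
    · simp
    have haA' : (a : ℝ) - 1 ≤ A := by linarith [(Nat.cast_le (α := ℝ)).2 haA]
    calc φ ^ (((a : ℝ) - 1) / A) ≤ φ :=
          goldenRatio_rpow_le_self (div_le_one_of_le₀ haA' A.cast_nonneg)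
      _ ≤ a := goldenRatio_lt_two.le.trans (by exact_mod_cast ha2)
  | a :: b :: M, h => by
    obtain ⟨ha1, haA⟩ := h a List.mem_cons_self
    have IH₁ := goldenRatio_rpow_le_continuant (L := b :: M) fun x hx =>
      h x (List.mem_cons_of_mem a hx)
    have IH₂ := goldenRatio_rpow_le_continuant (L := M) fun x hx =>
      h x (List.mem_cons_of_mem a (List.mem_cons_of_mem b hx))
    rw [continuant]
    simp only [List.sum_cons, Nat.cast_add, Nat.cast_mul] at IH₁ ⊢
    rcases ha1.eq_or_lt with rfl | ha2
    · rw [Nat.cast_one, one_mul, add_sub_cancel_left]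
      exact goldenRatio_rpow_le_add haA (h b (List.mem_cons_of_mem 1 List.mem_cons_self)).2 IH₁ IH₂
    · have ha2' : (2 : ℝ) ≤ a := by exact_mod_cast ha2
      calc φ ^ (((a : ℝ) + (b + M.sum) - 1) / A)
            = φ ^ ((a : ℝ) / A) * φ ^ (((b : ℝ) + M.sum - 1) / A) := by
            rw [← rpow_add goldenRatio_pos]
            ring_nf
        _ ≤ φ * continuant (b :: M) :=
            mul_le_mul (goldenRatio_rpow_le_self (div_le_one_of_le₀ (by exact_mod_cast haA)
              A.cast_nonneg)) IH₁ (rpow_nonneg goldenRatio_pos.le _) goldenRatio_pos.le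
        _ ≤ a * continuant (b :: M) + continuant M := by
            nlinarith [goldenRatio_lt_two, (Nat.cast_nonneg (continuant M) : (0 : ℝ) ≤ _),
              (Nat.cast_nonneg (continuant (b :: M)) : (0 : ℝ) ≤ _)]

open SimpleGraph

def cfVertex : ℕ → List ℕ → Type
  | a, [] => Fin (a - 1)
  | a, b :: M => Option (Fin (a - 1)) ⊕ cfVertex b M

instance finite_cfVertex : ∀ a M, Finite (cfVertex a M)
  | a, [] => inferInstanceAs (Finite (Fin (a - 1)))
  | _, b :: M => have := finite_cfVertex b M; inferInstanceAs (Finite (Option _ ⊕ _))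

def cfFirstBlock : (a : ℕ) → (M : List ℕ) → Set (cfVertex a M)
  | _, [] => univ
  | _, _ :: _ => range Sum.inl

def cfGraph : (a : ℕ) → (M : List ℕ) → SimpleGraph (cfVertex a M)
  | _, [] => ⊤
  | _, b :: M => attachClique none (cfGraph b M) (cfFirstBlock b M)

theorem card_cfVertex : ∀ {a : ℕ} {M : List ℕ}, (∀ x ∈ a :: M, 1 ≤ x) →
    Nat.card (cfVertex a M) + 1 = (a :: M).sum
  | a, [], h => by
    have := h a List.mem_cons_self
    rw [List.sum_singleton, ← Nat.sub_add_cancel this]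
    exact congrArg (· + 1) (Nat.card_fin (a - 1))
  | a, b :: M, h => by
    have := h a List.mem_cons_self
    have IH := card_cfVertex fun x hx => h x (List.mem_cons_of_mem a hx)
    change Nat.card (Option (Fin (a - 1)) ⊕ cfVertex b M) + 1 = _
    rw [Nat.card_sum, List.sum_cons, ← IH]
    simp only [Nat.card_eq_fintype_card, Fintype.card_option, Fintype.card_fin]
    omega

theorem numIndep_cfGraph : ∀ {a : ℕ} {M : List ℕ}, (∀ x ∈ a :: M, 1 ≤ x) →
    numIndep (cfGraph a M) = continuant (a :: M) ∧
      (cfGraph a M).numIndepWithin (cfFirstBlock a M)ᶜ = continuant M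
  | a, [], h => by
    have := h a List.mem_cons_self
    change numIndep (⊤ : SimpleGraph (Fin (a - 1))) = a ∧
      (⊤ : SimpleGraph (Fin (a - 1))).numIndepWithin univᶜ = 1
    rw [numIndep_eq_numIndepWithin_univ, top_numIndepWithin, ncard_univ, Nat.card_fin, compl_univ,
      numIndepWithin_empty]
    omega
  | a, b :: M, h => by
    have := h a List.mem_cons_self
    obtain ⟨IH₁, IH₂⟩ := numIndep_cfGraph fun x hx => h x (List.mem_cons_of_mem a hx)
    change numIndep (attachClique none (cfGraph b M) (cfFirstBlock b M)) =
        a * continuant (b :: M) + continuant M ∧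
      (attachClique (none : Option (Fin (a - 1))) (cfGraph b M) (cfFirstBlock b M)).numIndepWithin
        (range Sum.inl)ᶜ = continuant (b :: M)
    rw [numIndep_attachClique, IH₁, IH₂, numIndepWithin_attachClique_compl_range_inl, IH₁]
    simp only [Nat.card_eq_fintype_card, Fintype.card_option, Fintype.card_fin,
      Nat.sub_add_cancel this, and_true]

theorem card_edgeSet_cfGraph : ∀ {a : ℕ} {M : List ℕ}, (∀ x ∈ a :: M, 1 ≤ x ∧ x ≤ 5) →
    Nat.card (cfGraph a M).edgeSet + (cfFirstBlock a M).ncard + 3 ≤ 3 * (a :: M).sum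
  | a, [], h => by
    obtain ⟨ha1, ha5⟩ := h a List.mem_cons_self
    have hE := card_edgeSet_le_choose_two (⊤ : SimpleGraph (Fin (a - 1)))
    change Nat.card (⊤ : SimpleGraph (Fin (a - 1))).edgeSet + (univ : Set (Fin (a - 1))).ncard
      + 3 ≤ 3 * [a].sum
    rw [ncard_univ, List.sum_singleton, Nat.card_fin] at *
    have : (a - 1).choose 2 + 2 ≤ 2 * a := by interval_cases a <;> decide
    omega
  | a, b :: M, h => by
    obtain ⟨ha1, ha5⟩ := h a List.mem_cons_self
    have IH := card_edgeSet_cfGraph fun x hx => h x (List.mem_cons_of_mem a hx)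
    have hE := card_edgeSet_attachClique_le (none : Option (Fin (a - 1))) (cfGraph b M)
      (cfFirstBlock b M)
    change Nat.card (attachClique none (cfGraph b M) (cfFirstBlock b M)).edgeSet +
      (range (Sum.inl : Option (Fin (a - 1)) → Option (Fin (a - 1)) ⊕ cfVertex b M)).ncard + 3
        ≤ 3 * (a + (b :: M).sum)
    rw [ncard_range_of_injective Sum.inl_injective]
    simp only [Nat.card_eq_fintype_card, Fintype.card_option, Fintype.card_fin,
      Nat.sub_add_cancel ha1] at hE ⊢
    have : a.choose 2 ≤ 2 * a := by interval_cases a <;> decide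
    omega

theorem cfGraph_reachable_firstBlock : ∀ {a : ℕ} {M : List ℕ} (v : cfVertex a M),
    ∃ d ∈ cfFirstBlock a M, (cfGraph a M).Reachable v d
  | _, [], v => ⟨v, mem_univ v, Reachable.refl v⟩
  | _, _ :: _, v => ⟨.inl none, mem_range_self _,
      attachClique_reachable_inl _ _ _ cfGraph_reachable_firstBlock v⟩

theorem cfGraph_connected : ∀ {a : ℕ} {M : List ℕ}, 2 ≤ continuant (a :: M) →
    (cfGraph a M).Connected
  | a, [], h => by
    have : Nonempty (Fin (a - 1)) := ⟨⟨0, by rw [continuant] at h; omega⟩⟩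
    exact connected_top (V := Fin (a - 1))
  | _, _ :: _, _ => attachClique_connected _ _ _ cfGraph_reachable_firstBlock

theorem card_cfVertex_le_logb {a : ℕ} {M : List ℕ} (h : ∀ x ∈ a :: M, 1 ≤ x ∧ x ≤ 5) :
    (Nat.card (cfVertex a M) : ℝ) ≤ 5 * logb φ (continuant (a :: M)) := by
  have hpos : ∀ x ∈ a :: M, 1 ≤ x := fun x hx => (h x hx).1
  have hφ := goldenRatio_rpow_le_continuant h
  rw [← card_cfVertex hpos, Nat.cast_add, Nat.cast_one, add_sub_cancel_right] at hφ
  have := (le_logb_iff_rpow_le one_lt_goldenRatio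
    (Nat.cast_pos.2 (continuant_pos hpos))).2 hφ
  push_cast at this
  linarith

theorem card_edgeSet_cfGraph_le {a : ℕ} {M : List ℕ} (h : ∀ x ∈ a :: M, 1 ≤ x ∧ x ≤ 5) :
    Nat.card (cfGraph a M).edgeSet ≤ 3 * Nat.card (cfVertex a M) := by
  have := card_edgeSet_cfGraph h
  have := card_cfVertex fun x hx => (h x hx).1
  omega

/-- For every `q ∈ Q₅` with `q ≥ 2` there is a connected graph `G` with
`i(G) = q`, at most `5 log_φ q` vertices and at most `3 |V(G)|` edges. -/
theorem exists_connected_planarlike_graph_of_mem_QSet_five (q : ℕ) (hq : 2 ≤ q)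
    (hQ : q ∈ QSet 5) :
    ∃ (n : ℕ) (G : SimpleGraph (Fin n)), G.Connected ∧ numIndep G = q ∧
      (n : ℝ) ≤ 5 * (Real.log q / Real.log ((1 + Real.sqrt 5) / 2)) ∧
      Nat.card G.edgeSet ≤ 3 * n := by
  obtain rfl | ⟨p, -, -, hpq, L, hL, hL5, hcf⟩ := hQ
  · omega
  obtain ⟨a, M, rfl⟩ := List.exists_cons_of_ne_nil hL
  have hpos : ∀ x ∈ a :: M, 1 ≤ x := fun x hx => (hL5 x hx).1
  have hK : continuant (a :: M) = q := continuant_eq_of_contFrac_eq hpos (by omega) hpq hcf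
  let e := Finite.equivFin (cfVertex a M)
  have iso : cfGraph a M ≃g (cfGraph a M).map e.toEmbedding := Iso.map e _
  refine ⟨_, _, iso.connected_iff.1 (cfGraph_connected (hK ▸ hq)), ?_, ?_, ?_⟩
  · rw [← iso.numIndep_eq, (numIndep_cfGraph hpos).1, hK]
  · rw [Real.log_div_log, ← hK]
    exact card_cfVertex_le_logb hL5
  · rw [← Nat.card_congr iso.mapEdgeSet]
    exact card_edgeSet_cfGraph_le hL5
end

section
/- Let d ∈ (0,2) and set c₁ := d/(20(6−d)). Then there exist a constant C > 0 and N₀ such that for all N ≥ N₀, the number of integers m with 1 ≤ m ≤ N for which there exists a finite simple graph G (not necessarily connected) with average degree at most d and i(G) = m is at least C·N^{c₁}. -/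
/-- `Iavg d` is the set of positive integers of the form `i(G)` for a finite
simple graph `G` (not necessarily connected) of average degree at most `d`,
i.e. with `2|E(G)| ≤ d |V(G)|` (the empty graph has average degree `0`). -/
def Iavg (d : ℝ) : Set ℕ :=
  {m | ∃ (n : ℕ) (G : SimpleGraph (Fin n)),
    (2 * Nat.card G.edgeSet : ℝ) ≤ d * n ∧ numIndep G = m}

/-!
Root a graph at a vertex `z` and record the pair `(A, B)` of numbers of independent sets
avoiding and containing `z`. Adding a new vertex changes this pair by `(A, B) ↦ (A + B, A)` if
the new vertex is joined to `z` and becomes the root (a spine vertex), by `(A, B) ↦ (2A, B)` if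
it is a pendant leaf at `z`, and by `(A, B) ↦ (2A, 2B)` if it is isolated. From the state `(2, 1)`
every state satisfies `B < A`, and a spine step gives `A' < 2B'` while a leaf step gives
`A' > 2B'`; so a word of spine/leaf moves is determined by the resulting state, and `q` bits give
`2^q` distinct states using `q` edges. A further spine vertex with `q + 2` pendant leaves turns
the state into `i(G) = 2^(q+2) (A + B) + A` with `A < 2^(q+2)`, from which `(A, B)` is read off,
and isolated vertices pad the caterpillar to average degree at most `d` while only multiplying
`i(G)` by a power of two. With `n = log₂ N` vertices and `2q + 4 ≈ dn/2` edges this yields about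
`2^(dn/4) ≥ N^(d/4)/16` values in `[1, N]`, and `d/4 ≥ d/(20(6-d))`.
-/

namespace SimpleGraph

variable {V W : Type*}

lemma numIndep_congr {G : SimpleGraph V} {G' : SimpleGraph W} (f : G ≃g G') :
    numIndep G = numIndep G' := by
  refine Nat.card_congr <| (Equiv.Set.congr f.toEquiv).subtypeEquiv fun _ => ⟨?_, ?_⟩
  · rintro h _ ⟨x, hx, rfl⟩ _ ⟨y, hy, rfl⟩ hxy
    exact h x hx y hy (f.map_adj_iff.mp hxy)
  · intro h x hx y hy hxy
    exact h (f x) ⟨x, hx, rfl⟩ (f y) ⟨y, hy, rfl⟩ (f.map_adj_iff.mpr hxy)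

lemma numIndep_mem_Iavg [Finite V] {d : ℝ} (G : SimpleGraph V)
    (h : (2 * Nat.card G.edgeSet : ℝ) ≤ d * Nat.card V) : numIndep G ∈ Iavg d :=
  let f := Iso.map (Finite.equivFin V) G
  ⟨Nat.card V, _, by rwa [← Nat.card_congr f.mapEdgeSet], (numIndep_congr f).symm⟩

lemma numIndep_pos [Finite V] (G : SimpleGraph V) : 0 < numIndep G :=
  have : Nonempty {s : Set V // ∀ x ∈ s, ∀ y ∈ s, ¬ G.Adj x y} := ⟨⟨∅, by simp⟩⟩
  Nat.card_pos

lemma numIndep_le_two_pow_card [Finite V] (G : SimpleGraph V) :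
    numIndep G ≤ 2 ^ Nat.card V := by
  classical
  have := Fintype.ofFinite V
  calc numIndep G ≤ Nat.card (Set V) := Finite.card_subtype_le _
    _ = 2 ^ Nat.card V := by simp only [Nat.card_eq_fintype_card, Fintype.card_set]

lemma numIndep_eq_card_isIndepSet (G : SimpleGraph V) :
    numIndep G = Nat.card {s : Set V // G.IsIndepSet s} :=
  Nat.card_congr <| Equiv.subtypeEquivRight fun _ =>
    ⟨fun h _ hx _ hy _ => h _ hx _ hy, fun h _ hx y hy hxy =>
      h hx hy (fun hxy' => G.loopless.irrefl y (hxy' ▸ hxy)) hxy⟩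

noncomputable def indepCount (G : SimpleGraph V) (p : Set V → Prop) : ℕ :=
  Nat.card {s : Set V // G.IsIndepSet s ∧ p s}

lemma indepCount_false (G : SimpleGraph V) : G.indepCount (fun _ => False) = 0 := by
  simp [indepCount]

lemma indepCount_and_add_indepCount_and_not [Finite V] (G : SimpleGraph V)
    (p r : Set V → Prop) :
    G.indepCount (fun s => p s ∧ r s) + G.indepCount (fun s => p s ∧ ¬ r s) =
      G.indepCount p := by
  classical
  have e (r' : Set V → Prop) :
      {x : {s // G.IsIndepSet s ∧ p s} // r' x} ≃ {s // G.IsIndepSet s ∧ p s ∧ r' s} :=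
    (Equiv.subtypeSubtypeEquivSubtypeInter _ r').trans (Equiv.subtypeEquivRight fun _ => and_assoc)
  rw [indepCount, indepCount, indepCount, ← Nat.card_congr (e r),
    ← Nat.card_congr (e (¬ r ·)), ← Nat.card_sum]
  exact Nat.card_congr (Equiv.sumCompl _)

lemma numIndep_eq_indepCount_add (G : SimpleGraph V) [Finite V] (z : V) :
    numIndep G = G.indepCount (z ∉ ·) + G.indepCount (z ∈ ·) := by
  have h := G.indepCount_and_add_indepCount_and_not (fun _ => True) (z ∉ ·)
  simp only [true_and, not_not] at h
  rw [h, numIndep_eq_card_isIndepSet, indepCount]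
  exact Nat.card_congr (Equiv.subtypeEquivRight fun _ => (and_true _).symm.to_iff)

def addVertex (G : SimpleGraph V) (N : Set V) : SimpleGraph (Option V) where
  Adj
    | some u, some v => G.Adj u v
    | none, some v | some v, none => v ∈ N
    | none, none => False
  symm := ⟨by rintro (_ | u) (_ | v) h <;> first | exact h | exact G.adj_symm h⟩
  loopless := ⟨by rintro (_ | u) h; exacts [h, G.loopless.irrefl u h]⟩

variable {G : SimpleGraph V} {N : Set V}

lemma isIndepSet_addVertex_iff {s : Set (Option V)} :
    (G.addVertex N).IsIndepSet s ↔
      G.IsIndepSet (some ⁻¹' s) ∧ (none ∈ s → Disjoint N (some ⁻¹' s)) := by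
  refine ⟨fun h => ⟨fun x hx y hy hxy => h hx hy (by simpa using hxy), fun hn =>
    Set.disjoint_left.2 fun v hv hvs => h hn hvs (by simp) hv⟩, ?_⟩
  rintro ⟨h, hN⟩ (_ | x) hx (_ | y) hy hxy hadj
  · exact hxy rfl
  · exact Set.disjoint_left.1 (hN hx) hadj hy
  · exact Set.disjoint_left.1 (hN hy) hadj hx
  · exact h hx hy (by simpa using hxy) hadj

lemma indepCount_addVertex_of_none_notMem (q : Set V → Prop) :
    (G.addVertex N).indepCount (fun s => q (some ⁻¹' s) ∧ none ∉ s) = G.indepCount q := by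
  have hpre (T : Set V) : some ⁻¹' (some '' T) = T :=
    Set.preimage_image_eq _ (Option.some_injective V)
  refine Nat.card_congr
    { toFun s := ⟨some ⁻¹' s, (isIndepSet_addVertex_iff.1 s.2.1).1, s.2.2.1⟩
      invFun T := ⟨some '' T, isIndepSet_addVertex_iff.2 ⟨by rw [hpre]; exact T.2.1, by simp⟩,
        by rw [hpre]; exact T.2.2, by simp⟩
      left_inv s := Subtype.ext <| Set.image_preimage_eq_of_subset fun x hx => ?_
      right_inv T := Subtype.ext (hpre T) }
  cases x
  · exact absurd hx s.2.2.2
  · exact Set.mem_range_self _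

lemma indepCount_addVertex_of_none_mem (q : Set V → Prop) :
    (G.addVertex N).indepCount (fun s => q (some ⁻¹' s) ∧ none ∈ s) =
      G.indepCount fun T => q T ∧ Disjoint N T := by
  have hpre (T : Set V) : some ⁻¹' insert none (some '' T) = T := by
    ext; simp
  refine Nat.card_congr
    { toFun s := ⟨some ⁻¹' s, (isIndepSet_addVertex_iff.1 s.2.1).1, s.2.2.1,
        (isIndepSet_addVertex_iff.1 s.2.1).2 s.2.2.2⟩
      invFun T := ⟨insert none (some '' T),
        isIndepSet_addVertex_iff.2
          ⟨by rw [hpre]; exact T.2.1, fun _ => by rw [hpre]; exact T.2.2.2⟩,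
        by rw [hpre]; exact T.2.2.1, Set.mem_insert _ _⟩
      left_inv s := Subtype.ext ?_
      right_inv T := Subtype.ext (hpre T) }
  ext (_ | x)
  · simpa using s.2.2.2
  · simp

lemma indepCount_addVertex [Finite V] (q : Set V → Prop) :
    (G.addVertex N).indepCount (fun s => q (some ⁻¹' s)) =
      G.indepCount q + G.indepCount fun T => q T ∧ Disjoint N T := by
  rw [← (G.addVertex N).indepCount_and_add_indepCount_and_not _ (none ∈ ·),
    indepCount_addVertex_of_none_mem, indepCount_addVertex_of_none_notMem, add_comm]

lemma card_edgeSet_addVertex_le [Finite V] :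
    Nat.card (G.addVertex N).edgeSet ≤ Nat.card G.edgeSet + Nat.card N := by
  have hsub : (G.addVertex N).edgeSet ⊆
      Sym2.map some '' G.edgeSet ∪ (fun v => s(none, some v)) '' N := by
    intro e he
    induction e using Sym2.ind with | _ x y => ?_
    rcases x with _ | u <;> rcases y with _ | v
    · exact (he : False).elim
    · exact Or.inr ⟨v, he, rfl⟩
    · exact Or.inr ⟨u, he, Sym2.eq_swap⟩
    · exact Or.inl ⟨s(u, v), he, rfl⟩
  simp only [Nat.card_coe_set_eq]
  calc _ ≤ _ := Set.ncard_le_ncard hsub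
    _ ≤ _ := Set.ncard_union_le _ _
    _ ≤ _ := add_le_add Set.ncard_image_le Set.ncard_image_le

end SimpleGraph

namespace Caterpillar

open SimpleGraph

structure RootedGraph where
  V : Type
  [finite : Finite V]
  G : SimpleGraph V
  root : V

attribute [instance] RootedGraph.finite

namespace RootedGraph

noncomputable def counts (R : RootedGraph) : ℕ × ℕ :=
  (R.G.indepCount (R.root ∉ ·), R.G.indepCount (R.root ∈ ·))

lemma numIndep_eq_counts (R : RootedGraph) : numIndep R.G = R.counts.1 + R.counts.2 :=
  R.G.numIndep_eq_indepCount_add R.root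

def single : RootedGraph := ⟨Unit, ⊥, ()⟩

lemma counts_single : single.counts = (1, 1) := by
  refine Prod.ext (Nat.card_eq_one_iff_exists.2 ⟨⟨∅, by simp, Set.notMem_empty _⟩, ?_⟩)
    (Nat.card_eq_one_iff_exists.2 ⟨⟨Set.univ, fun _ _ _ _ _ => id, Set.mem_univ _⟩, ?_⟩) <;>
    rintro ⟨s, -, hs⟩ <;> ext ⟨⟩
  exacts [iff_of_false hs (Set.notMem_empty _), iff_of_true hs (Set.mem_univ _)]

end RootedGraph

inductive Op
  | spine
  | leaf
  | isolated

namespace Op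

def step : Op → ℕ × ℕ → ℕ × ℕ
  | spine, p => (p.1 + p.2, p.1)
  | leaf, p => (2 * p.1, p.2)
  | isolated, p => (2 * p.1, 2 * p.2)

def edgeCost : Op → ℕ
  | spine | leaf => 1
  | isolated => 0

def grow : Op → RootedGraph → RootedGraph
  | spine, R => ⟨Option R.V, R.G.addVertex {R.root}, none⟩
  | leaf, R => ⟨Option R.V, R.G.addVertex {R.root}, some R.root⟩
  | isolated, R => ⟨Option R.V, R.G.addVertex ∅, some R.root⟩

lemma counts_grow (o : Op) (R : RootedGraph) : (o.grow R).counts = o.step R.counts := by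
  have total := R.G.indepCount_and_add_indepCount_and_not (fun _ => True) (R.root ∉ ·)
  simp only [true_and, not_not] at total
  cases o
  · have h₁ := R.G.indepCount_addVertex_of_none_notMem (N := {R.root}) fun _ => True
    have h₂ := R.G.indepCount_addVertex_of_none_mem (N := {R.root}) fun _ => True
    simp only [true_and, Set.disjoint_singleton_left] at h₁ h₂
    exact Prod.ext (h₁.trans total.symm) h₂
  · have h₁ := R.G.indepCount_addVertex (N := {R.root}) (R.root ∉ ·)
    have h₂ := R.G.indepCount_addVertex (N := {R.root}) (R.root ∈ ·)
    simp only [Set.disjoint_singleton_left, and_self, and_not_self] at h₁ h₂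
    simp only [indepCount_false, add_zero] at h₂
    exact Prod.ext (h₁.trans (two_mul _).symm) h₂
  · have h₁ := R.G.indepCount_addVertex (N := ∅) (R.root ∉ ·)
    have h₂ := R.G.indepCount_addVertex (N := ∅) (R.root ∈ ·)
    simp only [Set.empty_disjoint, and_true] at h₁ h₂
    exact Prod.ext (h₁.trans (two_mul _).symm) (h₂.trans (two_mul _).symm)

lemma card_grow (o : Op) (R : RootedGraph) : Nat.card (o.grow R).V = Nat.card R.V + 1 := by
  cases o <;> exact Finite.card_option

lemma card_edgeSet_grow_le (o : Op) (R : RootedGraph) :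
    Nat.card (o.grow R).G.edgeSet ≤ Nat.card R.G.edgeSet + o.edgeCost := by
  cases o <;> refine card_edgeSet_addVertex_le.trans (by simp [edgeCost])

end Op

def build (w : List Op) : RootedGraph := w.foldr Op.grow RootedGraph.single

lemma counts_build (w : List Op) : (build w).counts = w.foldr Op.step (1, 1) := by
  induction w with
  | nil => exact RootedGraph.counts_single
  | cons o w ih => exact (o.counts_grow _).trans (congrArg o.step ih)

lemma card_build (w : List Op) : Nat.card (build w).V = w.length + 1 := by
  induction w with
  | nil => exact (Nat.card_unique : Nat.card Unit = 1)
  | cons o w ih => rw [build, List.foldr_cons, Op.card_grow, ← build, ih, List.length_cons]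

lemma card_edgeSet_build_le (w : List Op) :
    Nat.card (build w).G.edgeSet ≤ (w.map Op.edgeCost).sum := by
  induction w with
  | nil => simp [build, RootedGraph.single]
  | cons o w ih =>
    rw [List.map_cons, List.sum_cons, add_comm]
    exact (o.card_edgeSet_grow_le _).trans (Nat.add_le_add_right ih _)

def bitOp : Bool → Op
  | true => .spine
  | false => .leaf

def bitState (s : List Bool) : ℕ × ℕ := s.foldr (fun b => (bitOp b).step) (2, 1)

lemma one_le_bitState_snd_lt_fst (s : List Bool) :
    1 ≤ (bitState s).2 ∧ (bitState s).2 < (bitState s).1 := by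
  induction s with
  | nil => decide
  | cons b s ih =>
    cases b <;> simp only [bitState, List.foldr_cons, bitOp, Op.step] at ih ⊢ <;> omega

lemma bitState_add_le (s : List Bool) :
    (bitState s).1 + (bitState s).2 ≤ 2 ^ (s.length + 2) := by
  induction s with
  | nil => decide
  | cons b s ih =>
    have := one_le_bitState_snd_lt_fst s
    rw [List.length_cons, pow_succ]
    cases b <;> simp only [bitState, List.foldr_cons, bitOp, Op.step] at ih this ⊢ <;> omega

lemma bitOp_step_inj {b b' : Bool} {p p' : ℕ × ℕ} (hp : 1 ≤ p.2 ∧ p.2 < p.1)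
    (hp' : 1 ≤ p'.2 ∧ p'.2 < p'.1) (h : (bitOp b).step p = (bitOp b').step p') :
    b = b' ∧ p = p' := by
  obtain ⟨a, c⟩ := p
  obtain ⟨a', c'⟩ := p'
  cases b <;> cases b' <;>
    simp only [bitOp, Op.step, Prod.mk.injEq, reduceCtorEq, true_and, false_and] at h hp hp' ⊢ <;>
    omega

lemma bitState_cons_ne_nil (b : Bool) (s : List Bool) : bitState (b :: s) ≠ bitState [] := by
  have := one_le_bitState_snd_lt_fst s
  cases b <;> simp only [bitState, List.foldr_cons, List.foldr_nil, bitOp, Op.step, ne_eq,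
    Prod.ext_iff] at this ⊢ <;> omega

lemma bitState_injective : Function.Injective bitState := by
  intro s s' h
  induction s generalizing s' with
  | nil => cases s' with
    | nil => rfl
    | cons b s' => exact absurd h.symm (bitState_cons_ne_nil b s')
  | cons b s ih => cases s' with
    | nil => exact absurd h (bitState_cons_ne_nil b s)
    | cons b' s' =>
      obtain ⟨rfl, hs⟩ :=
        bitOp_step_inj (one_le_bitState_snd_lt_fst s) (one_le_bitState_snd_lt_fst s') h
      rw [ih hs]

-- `List.foldr` applies the last move first: a pendant leaf turns the one-vertex graph into the
-- state `(2, 1)`, then come the bits, then a spine vertex with `s.length + 2` pendant leaves, and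
-- finally isolated vertices up to `n` vertices in total.
def code (n : ℕ) (s : List Bool) : List Op :=
  List.replicate (n - (2 * s.length + 5)) .isolated ++ List.replicate (s.length + 2) .leaf ++
    .spine :: (s.map bitOp ++ [.leaf])

lemma foldr_step_replicate_isolated (t : ℕ) (p : ℕ × ℕ) :
    (List.replicate t Op.isolated).foldr Op.step p = (2 ^ t * p.1, 2 ^ t * p.2) := by
  induction t with
  | zero => simp
  | succ t ih => simp only [List.replicate_succ, List.foldr_cons, ih, Op.step, pow_succ]; ring_nf

lemma foldr_step_replicate_leaf (K : ℕ) (p : ℕ × ℕ) :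
    (List.replicate K Op.leaf).foldr Op.step p = (2 ^ K * p.1, p.2) := by
  induction K with
  | zero => simp
  | succ K ih => simp only [List.replicate_succ, List.foldr_cons, ih, Op.step, pow_succ]; ring_nf

lemma numIndep_build_code (n : ℕ) (s : List Bool) :
    numIndep (build (code n s)).G = 2 ^ (n - (2 * s.length + 5)) *
      (2 ^ (s.length + 2) * ((bitState s).1 + (bitState s).2) + (bitState s).1) := by
  have hbits : (s.map bitOp ++ [Op.leaf]).foldr Op.step (1, 1) = bitState s := by
    rw [List.foldr_append, List.foldr_map]
    rfl
  rw [RootedGraph.numIndep_eq_counts, counts_build, code, List.foldr_append, List.foldr_append,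
    foldr_step_replicate_isolated, foldr_step_replicate_leaf, List.foldr_cons, hbits]
  simp only [Op.step]
  ring

lemma card_build_code {n : ℕ} {s : List Bool} (hn : 2 * s.length + 5 ≤ n) :
    Nat.card (build (code n s)).V = n := by
  rw [card_build]
  simp only [code, List.append_assoc, List.length_append, List.length_replicate,
    List.length_cons, List.length_map, List.length_nil, zero_add]
  omega

lemma card_edgeSet_build_code_le (n : ℕ) (s : List Bool) :
    Nat.card (build (code n s)).G.edgeSet ≤ 2 * s.length + 4 := by
  have h : Op.edgeCost ∘ bitOp = fun _ => 1 := by funext b; cases b <;> rfl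
  refine (card_edgeSet_build_le _).trans_eq ?_
  simp only [code, List.append_assoc, List.map_append, List.map_replicate, Op.edgeCost,
    List.map_cons, List.map_map, h, List.map_const', List.map_nil, List.sum_append,
    List.sum_replicate, smul_eq_mul, mul_one, List.sum_cons, List.sum_nil, add_zero]
  omega

-- The value is `2^t (2^K (A + B) + A)` with `A < 2^K`, so it determines `A` and `A + B`.
lemma numIndep_build_code_inj {n : ℕ} {s s' : List Bool} (hlen : s.length = s'.length)
    (h : numIndep (build (code n s)).G = numIndep (build (code n s')).G) : s = s' := by
  rw [numIndep_build_code, numIndep_build_code, hlen] at h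
  set K := s'.length + 2
  have hA (s : List Bool) (hs : s.length + 2 = K) : (bitState s).1 < 2 ^ K := by
    have := bitState_add_le s
    have := one_le_bitState_snd_lt_fst s
    rw [hs] at *
    omega
  have decode {a b : ℕ} (ha : a < 2 ^ K) :
      (2 ^ K * b + a) / 2 ^ K = b ∧ (2 ^ K * b + a) % 2 ^ K = a :=
    (Nat.div_mod_unique (by positivity)).2 ⟨add_comm _ _, ha⟩
  have h := Nat.eq_of_mul_eq_mul_left (by positivity) h
  obtain ⟨hdiv, hmod⟩ := decode (b := (bitState s).1 + (bitState s).2) (hA s (by omega))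
  obtain ⟨hdiv', hmod'⟩ := decode (b := (bitState s').1 + (bitState s').2) (hA s' rfl)
  rw [h] at hdiv hmod
  apply bitState_injective
  ext <;> omega

end Caterpillar

open Caterpillar SimpleGraph

theorem two_pow_le_ncard_Iavg {d : ℝ} {q n N : ℕ} (hn : 2 * q + 5 ≤ n) (hN : 2 ^ n ≤ N)
    (hd : (2 * (2 * q + 4) : ℝ) ≤ d * n) : 2 ^ q ≤ (Iavg d ∩ Set.Icc 1 N).ncard := by
  let value (s : List.Vector Bool q) : ℕ := numIndep (build (code n s.toList)).G
  have hinj : Function.Injective value := fun s s' h =>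
    List.Vector.toList_injective (numIndep_build_code_inj (by simp) h)
  have hrange : Set.range value ⊆ Iavg d ∩ Set.Icc 1 N := by
    rintro _ ⟨s, rfl⟩
    have hV := card_build_code (n := n) (s := s.toList) (by rwa [s.toList_length])
    have hE := card_edgeSet_build_code_le n s.toList
    rw [s.toList_length] at hE
    refine ⟨numIndep_mem_Iavg _ ?_, numIndep_pos _, ?_⟩
    · have : (Nat.card (build (code n s.toList)).G.edgeSet : ℝ) ≤ 2 * q + 4 := by
        exact_mod_cast hE
      rw [hV]
      linarith
    · exact (hV ▸ numIndep_le_two_pow_card _).trans hN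
  calc 2 ^ q = Nat.card (List.Vector Bool q) := by simp
    _ = (Set.range value).ncard := (Set.ncard_range_of_injective hinj).symm
    _ ≤ _ := Set.ncard_le_ncard hrange ((Set.finite_Icc 1 N).inter_of_right _)

lemma rpow_le_sixteen_mul_two_pow {d : ℝ} (hd0 : 0 ≤ d) (hd2 : d ≤ 2) {N q : ℕ}
    (hq : d * Nat.log 2 N < 4 * q + 12) : (N : ℝ) ^ (d / 4) ≤ 16 * 2 ^ q := by
  have hN : (N : ℝ) ≤ 2 ^ (Nat.log 2 N + 1) := by
    exact_mod_cast (Nat.lt_pow_succ_log_self one_lt_two N).le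
  calc (N : ℝ) ^ (d / 4) ≤ ((2 : ℝ) ^ (Nat.log 2 N + 1)) ^ (d / 4) :=
        Real.rpow_le_rpow (by positivity) hN (by positivity)
    _ = (2 : ℝ) ^ ((Nat.log 2 N + 1 : ℕ) * (d / 4)) := by
        rw [← Real.rpow_natCast, ← Real.rpow_mul zero_le_two]
    _ ≤ (2 : ℝ) ^ ((q + 4 : ℕ) : ℝ) :=
        Real.rpow_le_rpow_of_exponent_le one_le_two (by push_cast; linarith)
    _ = 16 * 2 ^ q := by rw [Real.rpow_natCast, pow_add]; ring

/-- For `d ∈ (0,2)` and `c₁ = d/(20(6-d))`, there are `C > 0` and `N₀` with: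
for all `N ≥ N₀`, at least `C ⬝ N^{c₁}` integers in `{1,…,N}` are the number of
independent sets of a graph with average degree at most `d`. -/
theorem Iavg_lower_bound (d : ℝ) (hd : d ∈ Set.Ioo (0 : ℝ) 2) :
    ∃ C : ℝ, 0 < C ∧ ∃ N₀ : ℕ, ∀ N : ℕ, N₀ ≤ N →
      C * (N : ℝ) ^ (d / (20 * (6 - d))) ≤ ((Iavg d ∩ Set.Icc 1 N).ncard : ℝ) := by
  obtain ⟨hd0, hd2⟩ := hd
  refine ⟨1 / 16, by norm_num, 2 ^ ⌈8 / d⌉₊, fun N hN => ?_⟩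
  have hN0 : N ≠ 0 := by
    have := Nat.two_pow_pos ⌈8 / d⌉₊
    omega
  set P := Nat.log 2 N
  have hP : 8 ≤ d * P := by
    have h := (Nat.le_ceil (8 / d)).trans (Nat.cast_le.2 (Nat.le_log_of_pow_le one_lt_two hN))
    rwa [div_le_iff₀' hd0] at h
  set q := ⌊(d * P - 8) / 4⌋₊
  have hq : (q : ℝ) ≤ (d * P - 8) / 4 := Nat.floor_le (by linarith)
  have hq' : (d * P - 8) / 4 < q + 1 := Nat.lt_floor_add_one _
  have hcount : 2 ^ q ≤ (Iavg d ∩ Set.Icc 1 N).ncard := by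
    refine two_pow_le_ncard_Iavg (n := P) ?_ (Nat.pow_log_le_self 2 hN0) (by linarith)
    have hPpos : (0 : ℝ) < P := pos_of_mul_pos_right (by linarith) hd0.le
    have : (2 * q + 4 : ℝ) < P := by nlinarith [mul_pos (sub_pos.2 hd2) hPpos]
    exact_mod_cast this
  have hexp : (N : ℝ) ^ (d / (20 * (6 - d))) ≤ (N : ℝ) ^ (d / 4) :=
    Real.rpow_le_rpow_of_exponent_le (by exact_mod_cast Nat.one_le_iff_ne_zero.2 hN0)
      (div_le_div_of_nonneg_left hd0.le (by norm_num) (by linarith))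
  have hgrowth := rpow_le_sixteen_mul_two_pow hd0.le hd2.le (q := q) (N := N) (by linarith)
  calc 1 / 16 * (N : ℝ) ^ (d / (20 * (6 - d))) ≤ 2 ^ q := by linarith
    _ ≤ _ := by exact_mod_cast hcount
end

section
/- Let d ∈ (0,2) and let ε be any real number with 1/2 + d/4 < ε < 1. Then there exist a constant C > 0 and N₀ such that for all N ≥ N₀, the number of integers m with 1 ≤ m ≤ N for which there exists a finite simple graph G (not necessarily connected) with average degree at most d and i(G) = m is at most C·N^{ε}. -/
theorem Nat.card_set_eq_two_pow (α : Type*) [Finite α] : Nat.card (Set α) = 2 ^ Nat.card α := by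
  have := Fintype.ofFinite α
  simp [Nat.card_eq_fintype_card]

namespace SimpleGraph

variable {V : Type*} (G : SimpleGraph V)

noncomputable def numIndepOn (W : Set V) : ℕ :=
  Nat.card {s : Set V // s ⊆ W ∧ G.IsIndepSet s}

noncomputable def numEdgesOn (W : Set V) : ℕ :=
  {e ∈ G.edgeSet | ∀ v ∈ e, v ∈ W}.ncard

theorem numIndepOn_univ : G.numIndepOn Set.univ = numIndep G :=
  Nat.card_congr <| Equiv.subtypeEquivRight fun s =>
    ⟨fun h _ hx _ hy hxy => h.2 hx hy (G.ne_of_adj hxy) hxy,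
      fun h => ⟨s.subset_univ, fun x hx y hy _ => h x hx y hy⟩⟩

theorem numIndepOn_empty : G.numIndepOn ∅ = 1 := by
  rw [numIndepOn, Nat.card_eq_one_iff_unique]
  refine ⟨⟨fun s t => Subtype.ext ?_⟩, ⟨⟨∅, subset_rfl, Set.pairwise_empty _⟩⟩⟩
  rw [Set.subset_empty_iff.1 s.2.1, Set.subset_empty_iff.1 t.2.1]

theorem numIndepOn_union {W₁ W₂ : Set V} (hW : Disjoint W₁ W₂)
    (hadj : ∀ x ∈ W₁, ∀ y ∈ W₂, ¬ G.Adj x y) :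
    G.numIndepOn (W₁ ∪ W₂) = G.numIndepOn W₁ * G.numIndepOn W₂ := by
  rw [numIndepOn, numIndepOn, numIndepOn, ← Nat.card_prod]
  refine Nat.card_congr
    { toFun s := (⟨s.1 ∩ W₁, Set.inter_subset_right, s.2.2.mono Set.inter_subset_left⟩,
        ⟨s.1 ∩ W₂, Set.inter_subset_right, s.2.2.mono Set.inter_subset_left⟩)
      invFun p := ⟨p.1.1 ∪ p.2.1, Set.union_subset_union p.1.2.1 p.2.2.1,
        Set.pairwise_union.2 ⟨p.1.2.2, p.2.2.2, fun x hx y hy _ =>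
          ⟨hadj x (p.1.2.1 hx) y (p.2.2.1 hy), fun h => hadj x (p.1.2.1 hx) y (p.2.2.1 hy) h.symm⟩⟩⟩
      left_inv s := Subtype.ext <| by
        simp only [← Set.inter_union_distrib_left, Set.inter_eq_left.2 s.2.1]
      right_inv p := ?_ }
  obtain ⟨⟨s₁, hs₁, -⟩, ⟨s₂, hs₂, -⟩⟩ := p
  have h₁₂ : s₁ ∩ W₂ = ∅ := (hW.mono_left hs₁).inter_eq
  have h₂₁ : s₂ ∩ W₁ = ∅ := (hW.symm.mono_left hs₂).inter_eq
  simp [Set.union_inter_distrib_right, Set.inter_eq_left.2 hs₁, Set.inter_eq_left.2 hs₂, h₁₂, h₂₁]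

theorem numEdgesOn_empty : G.numEdgesOn ∅ = 0 := by
  rw [numEdgesOn, Set.eq_empty_of_forall_notMem (s := {e ∈ G.edgeSet | ∀ v ∈ e, v ∈ ∅})
    fun e he => he.2 _ (Sym2.out_fst_mem e), Set.ncard_empty]

theorem numEdgesOn_univ : G.numEdgesOn Set.univ = Nat.card G.edgeSet := by
  simp [numEdgesOn, ← Nat.card_coe_set_eq]

theorem not_adj_of_mem_preimage_of_disjoint {s t : Set G.ConnectedComponent} (hst : Disjoint s t)
    {x y : V} (hx : x ∈ G.connectedComponentMk ⁻¹' s) (hy : y ∈ G.connectedComponentMk ⁻¹' t) :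
    ¬ G.Adj x y := fun hxy => by
  rw [Set.mem_preimage, ← ConnectedComponent.connectedComponentMk_eq_of_adj hxy] at hy
  exact Set.disjoint_left.1 hst hx hy

@[to_additive]
theorem map_preimage_connectedComponentMk_eq_prod {M : Type*} [CommMonoid M] (F : Set V → M)
    (h_empty : F ∅ = 1)
    (h_union : ∀ W₁ W₂, Disjoint W₁ W₂ → (∀ x ∈ W₁, ∀ y ∈ W₂, ¬ G.Adj x y) →
      F (W₁ ∪ W₂) = F W₁ * F W₂)
    (cs : Finset G.ConnectedComponent) :
    F (G.connectedComponentMk ⁻¹' cs) = ∏ c ∈ cs, F c.supp := by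
  classical
  induction cs using Finset.induction_on with
  | empty => simpa using h_empty
  | insert c cs hc ih =>
    have hdisj : Disjoint ({c} : Set G.ConnectedComponent) cs := Set.disjoint_singleton_left.2 hc
    rw [Finset.coe_insert, Set.insert_eq, Set.preimage_union, Finset.prod_insert hc, ← ih,
      h_union _ _ (hdisj.preimage _) fun x hx y hy =>
        G.not_adj_of_mem_preimage_of_disjoint hdisj hx hy]
    rfl

variable [Finite V]

theorem numIndepOn_le_two_pow_ncard (W : Set V) : G.numIndepOn W ≤ 2 ^ W.ncard := by
  rw [← Nat.card_coe_set_eq, ← Nat.card_set_eq_two_pow]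
  have hval (s : {s : Set V // s ⊆ W ∧ G.IsIndepSet s}) :
      Subtype.val '' (Subtype.val ⁻¹' s.1 : Set W) = s.1 := by
    rw [Subtype.image_preimage_coe, Set.inter_eq_right.2 s.2.1]
  refine Nat.card_le_card_of_injective (fun s => Subtype.val ⁻¹' s.1) fun s t hst =>
    Subtype.ext <| (hval s).symm.trans ((congrArg (Subtype.val '' ·) hst).trans (hval t))

theorem two_pow_ncard_le_numIndepOn {I W : Set V} (hIW : I ⊆ W) (hI : G.IsIndepSet I) :
    2 ^ I.ncard ≤ G.numIndepOn W := by
  rw [← Nat.card_coe_set_eq, ← Nat.card_set_eq_two_pow]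
  refine Nat.card_le_card_of_injective
    (fun t : Set I => ⟨Subtype.val '' t, (Subtype.coe_image_subset _ _).trans hIW,
      hI.mono (Subtype.coe_image_subset _ _)⟩) fun t t' h => ?_
  exact Set.image_injective.2 Subtype.val_injective (congrArg Subtype.val h)

theorem two_le_numIndepOn {W : Set V} (hW : W.Nonempty) : 2 ≤ G.numIndepOn W := by
  obtain ⟨v, hv⟩ := hW
  simpa using G.two_pow_ncard_le_numIndepOn (Set.singleton_subset_iff.2 hv)
    (Set.pairwise_singleton v _)

theorem numEdgesOn_union {W₁ W₂ : Set V} (hW : Disjoint W₁ W₂)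
    (hadj : ∀ x ∈ W₁, ∀ y ∈ W₂, ¬ G.Adj x y) :
    G.numEdgesOn (W₁ ∪ W₂) = G.numEdgesOn W₁ + G.numEdgesOn W₂ := by
  rw [numEdgesOn, numEdgesOn, numEdgesOn, ← Set.ncard_union_eq]
  · congr 1
    ext e
    induction e with | h x y => ?_
    have hx := hadj x
    have hy := hadj y
    simp only [Set.mem_union, Set.mem_ofPred_eq, mem_edgeSet, Sym2.mem_iff, forall_eq_or_imp,
      forall_eq]
    tauto
  · refine Set.disjoint_left.2 fun e he₁ he₂ => ?_
    exact hW.ne_of_mem (he₁.2 _ (Sym2.out_fst_mem e)) (he₂.2 _ (Sym2.out_fst_mem e)) rfl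

theorem ncard_le_numEdgesOn_of_exists_adj_lt {β : Type*} [Preorder β] (φ : V → β) {D W : Set V}
    (hDW : D ⊆ W) (h : ∀ v ∈ D, ∃ u ∈ W, G.Adj v u ∧ φ u < φ v) : D.ncard ≤ G.numEdgesOn W := by
  choose! f hfW hadj hlt using h
  rw [numEdgesOn, ← Nat.card_coe_set_eq, ← Nat.card_coe_set_eq]
  refine Nat.card_le_card_of_injective
    (fun v : D => ⟨s(v, f v), G.mem_edgeSet.2 (hadj v v.2), fun w hw => ?_⟩) ?_
  · rcases Sym2.mem_iff.1 hw with rfl | rfl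
    exacts [hDW v.2, hfW v v.2]
  · rintro ⟨v, hv⟩ ⟨v', hv'⟩ h
    simp only [Subtype.mk.injEq, Sym2.eq_iff] at h
    rcases h with ⟨rfl, -⟩ | ⟨rfl, h⟩
    · rfl
    -- two distinct vertices sharing their edge would make `φ` decrease around a 2-cycle
    · have h₁ := hlt _ hv
      rw [h] at h₁
      exact absurd (hlt _ hv') (lt_asymm h₁)

theorem card_edgeSet_induce_le_numEdgesOn (W : Set V) :
    Nat.card (G.induce W).edgeSet ≤ G.numEdgesOn W := by
  rw [numEdgesOn, ← Nat.card_coe_set_eq]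
  refine Nat.card_le_card_of_injective
    (fun e => ⟨(Embedding.induce W).mapEdgeSet e, ((Embedding.induce W).mapEdgeSet e).2,
      fun v hv => ?_⟩) fun e e' h => (Embedding.induce W).mapEdgeSet.injective (Subtype.ext
        (congrArg (fun e => e.1) h))
  obtain ⟨a, -, rfl⟩ := Sym2.mem_map.1 hv
  exact a.2

theorem exists_isIndepSet_ncard_le_add_numEdgesOn (W : Set V) :
    ∃ I ⊆ W, G.IsIndepSet I ∧ W.ncard ≤ I.ncard + G.numEdgesOn W := by
  obtain ⟨n, ⟨e⟩⟩ := Finite.exists_equiv_fin V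
  set I := {v ∈ W | ∀ u ∈ W, G.Adj v u → e v < e u}
  refine ⟨I, fun v hv => hv.1, ?_, ?_⟩
  · rintro x ⟨hxW, hx⟩ y ⟨hyW, hy⟩ - hxy
    exact lt_asymm (hx y hyW hxy) (hy x hxW hxy.symm)
  · -- each vertex outside `I` is charged to the edge joining it to a smaller neighbour
    have hsdiff : (W \ I).ncard ≤ G.numEdgesOn W := by
      refine G.ncard_le_numEdgesOn_of_exists_adj_lt e Set.sdiff_subset ?_
      rintro v ⟨hvW, hvI⟩
      simp only [I, Set.mem_ofPred_eq, hvW, true_and, not_forall, not_lt] at hvI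
      obtain ⟨u, huW, hvu, hle⟩ := hvI
      exact ⟨u, huW, hvu, hle.lt_of_ne (e.injective.ne (G.ne_of_adj hvu).symm)⟩
    have := Set.ncard_le_ncard_sdiff_add_ncard W I
    omega

theorem two_pow_ncard_le_numIndepOn_mul (W : Set V) :
    2 ^ W.ncard ≤ G.numIndepOn W * 2 ^ G.numEdgesOn W := by
  obtain ⟨I, hIW, hI, hcard⟩ := G.exists_isIndepSet_ncard_le_add_numEdgesOn W
  calc 2 ^ W.ncard ≤ 2 ^ (I.ncard + G.numEdgesOn W) := Nat.pow_le_pow_right two_pos hcard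
    _ = 2 ^ I.ncard * 2 ^ G.numEdgesOn W := pow_add ..
    _ ≤ _ := Nat.mul_le_mul_right _ (G.two_pow_ncard_le_numIndepOn hIW hI)

theorem numIndepOn_preimage_mem_closure {A : ℕ} (cs : Finset G.ConnectedComponent)
    (hcs : ∀ c ∈ cs, c.supp.ncard ≤ A) :
    G.numIndepOn (G.connectedComponentMk ⁻¹' cs) ∈ Submonoid.closure (Set.Icc 2 (2 ^ A)) := by
  rw [G.map_preimage_connectedComponentMk_eq_prod _ G.numIndepOn_empty
    fun _ _ => G.numIndepOn_union]
  refine prod_mem fun c hc => Submonoid.subset_closure ⟨G.two_le_numIndepOn c.nonempty_supp, ?_⟩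
  exact (G.numIndepOn_le_two_pow_ncard _).trans (Nat.pow_le_pow_right two_pos (hcs c hc))

theorem ConnectedComponent.ncard_supp_le_numEdgesOn_supp_add_one (c : G.ConnectedComponent) :
    c.supp.ncard ≤ G.numEdgesOn c.supp + 1 := by
  have := c.maximal_connected_induce_supp.prop.card_vert_le_card_edgeSet_add_one
  rw [Nat.card_coe_set_eq] at this
  exact this.trans (Nat.add_le_add_right (G.card_edgeSet_induce_le_numEdgesOn _) 1)

theorem mul_ncard_preimage_le_succ_mul_numEdgesOn {A : ℕ} (cs : Finset G.ConnectedComponent)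
    (hcs : ∀ c ∈ cs, A < c.supp.ncard) :
    A * (G.connectedComponentMk ⁻¹' cs).ncard ≤
      (A + 1) * G.numEdgesOn (G.connectedComponentMk ⁻¹' cs) := by
  rw [G.map_preimage_connectedComponentMk_eq_sum _ (Set.ncard_empty V)
      fun _ _ hW _ => Set.ncard_union_eq hW,
    G.map_preimage_connectedComponentMk_eq_sum _ G.numEdgesOn_empty
      fun _ _ => G.numEdgesOn_union, Finset.mul_sum, Finset.mul_sum]
  refine Finset.sum_le_sum fun c hc => ?_
  have := c.ncard_supp_le_numEdgesOn_supp_add_one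
  have := hcs c hc
  nlinarith

theorem exists_split_small_large_components (A : ℕ) :
    ∃ S T : Set V, G.numIndepOn S * G.numIndepOn T = numIndep G ∧
      G.numIndepOn S ∈ Submonoid.closure (Set.Icc 2 (2 ^ A)) ∧
      S.ncard + T.ncard = Nat.card V ∧
      G.numEdgesOn S + G.numEdgesOn T = Nat.card G.edgeSet ∧
      A * T.ncard ≤ (A + 1) * G.numEdgesOn T := by
  classical
  have := Fintype.ofFinite G.ConnectedComponent
  set cs := Finset.univ.filter fun c : G.ConnectedComponent => c.supp.ncard ≤ A
  have hdisj : Disjoint (cs : Set G.ConnectedComponent) ↑csᶜ := by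
    rw [Finset.disjoint_coe]; exact disjoint_compl_right
  have hunion : G.connectedComponentMk ⁻¹' cs ∪ G.connectedComponentMk ⁻¹' ↑csᶜ = Set.univ := by
    rw [← Set.preimage_union, ← Finset.coe_union, Finset.union_compl, Finset.coe_univ,
      Set.preimage_univ]
  have hadj : ∀ x ∈ G.connectedComponentMk ⁻¹' cs, ∀ y ∈ G.connectedComponentMk ⁻¹' ↑csᶜ,
      ¬ G.Adj x y := fun x hx y hy => G.not_adj_of_mem_preimage_of_disjoint hdisj hx hy
  refine ⟨_, _, ?_, G.numIndepOn_preimage_mem_closure cs (by simp [cs]), ?_, ?_,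
    G.mul_ncard_preimage_le_succ_mul_numEdgesOn csᶜ (by simp [cs])⟩
  · rw [← G.numIndepOn_union (hdisj.preimage _) hadj, hunion, numIndepOn_univ]
  · rw [← Set.ncard_union_eq (hdisj.preimage _), hunion, Set.ncard_univ]
  · rw [← G.numEdgesOn_union (hdisj.preimage _) hadj, hunion, numEdgesOn_univ]

theorem exists_mul_eq_numIndep_rpow_le {A : ℕ} {d : ℝ} (hdA : d / 2 ≤ A / (A + 1))
    (hE : 2 * Nat.card G.edgeSet ≤ d * Nat.card V) :
    ∃ p q : ℕ, p * q = numIndep G ∧ p ∈ Submonoid.closure (Set.Icc 2 (2 ^ A)) ∧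
      (q : ℝ) ^ ((A / (A + 1) : ℝ) - d / 2) ≤ p := by
  obtain ⟨S, T, hpq, hp, hV, hES, hET⟩ := G.exists_split_small_large_components A
  refine ⟨_, _, hpq, hp, ?_⟩
  set θ : ℝ := A / (A + 1) - d / 2 with hθ_def
  have hexp : θ * T.ncard ≤ (S.ncard : ℝ) - G.numEdgesOn S := by
    have hV' : (S.ncard : ℝ) + T.ncard = Nat.card V := by exact_mod_cast hV
    have hES' : (G.numEdgesOn S : ℝ) + G.numEdgesOn T = Nat.card G.edgeSet := by
      exact_mod_cast hES
    have hET' : (A : ℝ) * T.ncard ≤ (A + 1) * G.numEdgesOn T := by exact_mod_cast hET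
    have hET_div : (A / (A + 1) : ℝ) * T.ncard ≤ G.numEdgesOn T := by
      rw [div_mul_eq_mul_div, div_le_iff₀ (by positivity)]
      linarith
    have hd : d ≤ 2 := by
      have : (A / (A + 1) : ℝ) ≤ 1 := div_le_one_of_le₀ (by linarith) (by positivity)
      linarith
    rw [← hV', ← hES'] at hE
    rw [hθ_def]
    linarith [mul_le_mul_of_nonneg_right hd (Nat.cast_nonneg S.ncard : (0 : ℝ) ≤ S.ncard)]
  calc (G.numIndepOn T : ℝ) ^ θ ≤ ((2 : ℝ) ^ (T.ncard : ℝ)) ^ θ := by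
        rw [Real.rpow_natCast]
        gcongr
        exact_mod_cast G.numIndepOn_le_two_pow_ncard T
    _ = 2 ^ (θ * T.ncard) := by rw [← Real.rpow_mul zero_le_two, mul_comm]
    _ ≤ 2 ^ ((S.ncard : ℝ) - G.numEdgesOn S) :=
        Real.rpow_le_rpow_of_exponent_le one_le_two hexp
    _ = 2 ^ S.ncard / 2 ^ G.numEdgesOn S := by
        rw [Real.rpow_sub two_pos, Real.rpow_natCast, Real.rpow_natCast]
    _ ≤ G.numIndepOn S := by
        rw [div_le_iff₀ (by positivity)]
        exact_mod_cast G.two_pow_ncard_le_numIndepOn_mul S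

end SimpleGraph

theorem Set.ncard_image2_le {α β γ : Type*} (f : α → β → γ) {s : Set α} {t : Set β}
    (hs : s.Finite) (ht : t.Finite) : (Set.image2 f s t).ncard ≤ s.ncard * t.ncard := by
  rw [← Set.image_prod, ← Set.ncard_prod]
  exact Set.ncard_image_le (hs.prod ht)

theorem ncard_setOf_mem_closure_le (F : Finset ℕ) (hF : ∀ a ∈ F, 2 ≤ a) (N : ℕ) :
    {p | p ∈ Submonoid.closure (F : Set ℕ) ∧ p ≤ N}.ncard ≤ (Nat.log 2 N + 1) ^ F.card := by
  classical
  let prodPow : (F → ℕ) → ℕ := fun f => ∏ a : F, (a : ℕ) ^ f a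
  have hsub : {p | p ∈ Submonoid.closure (F : Set ℕ) ∧ p ≤ N} ⊆
      ↑((Fintype.piFinset fun _ : F => Finset.range (Nat.log 2 N + 1)).image prodPow) := by
    rintro p ⟨hp, hpN⟩
    obtain ⟨f, -, rfl⟩ := Submonoid.mem_closure_finset.1 hp
    refine Finset.mem_image.2 ⟨fun a => f a, Fintype.mem_piFinset.2 fun a => ?_,
      Finset.prod_coe_sort F fun a => a ^ f a⟩
    have hfac : (a : ℕ) ^ f a ≤ ∏ b ∈ F, b ^ f b :=
      Finset.single_le_prod' (f := fun b => b ^ f b)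
        (fun b hb => Nat.one_le_pow _ _ (two_pos.trans_le (hF b hb))) a.2
    exact Finset.mem_range_succ_iff.2 (Nat.le_log_of_pow_le one_lt_two
      ((Nat.pow_le_pow_left (hF a a.2) _).trans (hfac.trans hpN)))
  calc _ ≤ _ := Set.ncard_le_ncard hsub (Finset.finite_toSet _)
    _ ≤ _ := (Set.ncard_coe_finset _).trans_le Finset.card_image_le
    _ = _ := by simp

theorem natLog_add_one_le_mul_rpow {δ : ℝ} (hδ : 0 < δ) {N : ℕ} (hN : 1 ≤ N) :
    (Nat.log 2 N + 1 : ℝ) ≤ (1 / (δ * Real.log 2) + 1) * (N : ℝ) ^ δ := by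
  have hNδ : (1 : ℝ) ≤ (N : ℝ) ^ δ := Real.one_le_rpow (by exact_mod_cast hN) hδ.le
  have hlog : (Nat.log 2 N : ℝ) ≤ (N : ℝ) ^ δ / (δ * Real.log 2) :=
    calc (Nat.log 2 N : ℝ) ≤ Real.logb 2 N := by exact_mod_cast Real.natLog_le_logb N 2
      _ = Real.log N / Real.log 2 := rfl
      _ ≤ (N : ℝ) ^ δ / δ / Real.log 2 := by
          gcongr
          exact Real.log_le_rpow_div (by positivity) hδ
      _ = _ := div_div _ _ _
  calc (Nat.log 2 N + 1 : ℝ) ≤ (N : ℝ) ^ δ / (δ * Real.log 2) + (N : ℝ) ^ δ := by linarith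
    _ = _ := by ring

theorem exists_pow_natLog_mul_rpow_le (K : ℕ) {a b : ℝ} (hab : a < b) :
    ∃ C : ℝ, 0 < C ∧ ∀ N : ℕ, 1 ≤ N →
      (Nat.log 2 N + 1 : ℝ) ^ K * (N : ℝ) ^ a ≤ C * (N : ℝ) ^ b := by
  set δ := (b - a) / (K + 1)
  have hδ : 0 < δ := div_pos (sub_pos.2 hab) (by positivity)
  have hδK : δ * K + a ≤ b := by
    have : δ * K ≤ b - a := by
      rw [div_mul_eq_mul_div, div_le_iff₀ (by positivity)]
      nlinarith
    linarith
  refine ⟨(1 / (δ * Real.log 2) + 1) ^ K, by positivity, fun N hN => ?_⟩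
  have hN' : (1 : ℝ) ≤ N := by exact_mod_cast hN
  calc (Nat.log 2 N + 1 : ℝ) ^ K * (N : ℝ) ^ a
      ≤ ((1 / (δ * Real.log 2) + 1) * (N : ℝ) ^ δ) ^ K * (N : ℝ) ^ a := by
        gcongr
        exact natLog_add_one_le_mul_rpow hδ hN
    _ = (1 / (δ * Real.log 2) + 1) ^ K * (N : ℝ) ^ (δ * K + a) := by
        rw [mul_pow, Real.rpow_add (by positivity), Real.rpow_mul_natCast (by positivity)]
        ring
    _ ≤ _ := by gcongr

theorem exists_lt_nat_div_succ {x : ℝ} (hx : x < 1) : ∃ A : ℕ, x < A / (A + 1) := by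
  obtain ⟨A, hA⟩ := exists_nat_gt (1 / (1 - x))
  rw [div_lt_iff₀ (sub_pos.2 hx)] at hA
  exact ⟨A, by rw [lt_div_iff₀ (by positivity)]; linarith⟩

theorem Iavg_inter_Icc_subset_image2 {d : ℝ} {A : ℕ} (hdA : d / 2 ≤ A / (A + 1)) (N : ℕ) :
    Iavg d ∩ Set.Icc 1 N ⊆ Set.image2 (· * ·)
      {p | p ∈ Submonoid.closure (Set.Icc 2 (2 ^ A)) ∧ p ≤ N}
      (Set.Icc 1 ⌊(N : ℝ) ^ (1 + ((A / (A + 1) : ℝ) - d / 2))⁻¹⌋₊) := by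
  rintro _ ⟨⟨n, G, hE, rfl⟩, hm1, hmN⟩
  obtain ⟨p, q, hpq, hp, hqp⟩ := G.exists_mul_eq_numIndep_rpow_le hdA (by simpa using hE)
  rw [← hpq] at hm1 hmN
  have hq1 : 1 ≤ q := Nat.one_le_iff_ne_zero.2 (by rintro rfl; simp at hm1)
  refine ⟨p, ⟨hp, (Nat.le_mul_of_pos_right p hq1).trans hmN⟩, q, ⟨hq1, Nat.le_floor ?_⟩, hpq⟩
  rw [Real.le_rpow_inv_iff_of_pos (by positivity) (by positivity) (by linarith)]
  calc (q : ℝ) ^ (1 + ((A / (A + 1) : ℝ) - d / 2))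
      = q * q ^ ((A / (A + 1) : ℝ) - d / 2) := by
        rw [Real.rpow_add (by exact_mod_cast hq1), Real.rpow_one]
    _ ≤ q * p := by gcongr
    _ ≤ N := by rw [mul_comm]; exact_mod_cast hmN

theorem ncard_Iavg_inter_Icc_le {d : ℝ} {A : ℕ} (hdA : d / 2 ≤ A / (A + 1)) (N : ℕ) :
    (Iavg d ∩ Set.Icc 1 N).ncard ≤
      (Nat.log 2 N + 1) ^ (2 ^ A - 1) * ⌊(N : ℝ) ^ (1 + ((A / (A + 1) : ℝ) - d / 2))⁻¹⌋₊ := by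
  have hP := ncard_setOf_mem_closure_le (Finset.Icc 2 (2 ^ A))
    (fun a ha => (Finset.mem_Icc.1 ha).1) N
  rw [Finset.coe_Icc, Nat.card_Icc] at hP
  refine (Set.ncard_le_ncard (Iavg_inter_Icc_subset_image2 hdA N) ?_).trans
    ((Set.ncard_image2_le _ ?_ (Set.finite_Icc _ _)).trans ?_)
  · exact ((Set.finite_Iic N).subset fun p hp => hp.2).image2 _ (Set.finite_Icc _ _)
  · exact (Set.finite_Iic N).subset fun p hp => hp.2
  · rw [Set.ncard_Icc_nat, show 2 ^ A + 1 - 2 = 2 ^ A - 1 by omega] at *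
    exact Nat.mul_le_mul hP le_rfl

/-- For `d ∈ (0,2)` and any `ε` with `1/2 + d/4 < ε < 1`, there are `C > 0` and
`N₀` with: for all `N ≥ N₀`, at most `C ⬝ N^ε` integers in `{1,…,N}` are the
number of independent sets of a graph with average degree at most `d`. -/
theorem Iavg_upper_bound (d : ℝ) (hd : d ∈ Set.Ioo (0 : ℝ) 2) (ε : ℝ)
    (hε₁ : 1 / 2 + d / 4 < ε) (hε₂ : ε < 1) :
    ∃ C : ℝ, 0 < C ∧ ∃ N₀ : ℕ, ∀ N : ℕ, N₀ ≤ N →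
      ((Iavg d ∩ Set.Icc 1 N).ncard : ℝ) ≤ C * (N : ℝ) ^ ε := by
  obtain ⟨hd₀, hd₂⟩ := hd
  have hε₀ : 0 < ε := by linarith
  have hε_inv : ε⁻¹ < 2 - d / 2 := by
    refine inv_lt_of_inv_lt₀ (by linarith) ((inv_lt_iff_one_lt_mul₀' (by linarith)).2 ?_)
    nlinarith [mul_pos (sub_pos.2 hε₁) (by linarith : (0 : ℝ) < 2 - d / 2),
      mul_pos hd₀ (sub_pos.2 hd₂)]
  obtain ⟨A, hA⟩ := exists_lt_nat_div_succ (x := ε⁻¹ - 1 + d / 2) (by linarith)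
  have hdA : d / 2 ≤ A / (A + 1) := by linarith [one_lt_inv₀ hε₀ |>.2 hε₂]
  have hθ : (1 + ((A / (A + 1) : ℝ) - d / 2))⁻¹ < ε := inv_lt_of_inv_lt₀ hε₀ (by linarith)
  obtain ⟨C, hC, hbound⟩ := exists_pow_natLog_mul_rpow_le (2 ^ A - 1) hθ
  refine ⟨C, hC, 1, fun N hN => ?_⟩
  calc ((Iavg d ∩ Set.Icc 1 N).ncard : ℝ)
      ≤ ((Nat.log 2 N + 1) ^ (2 ^ A - 1) *
          ⌊(N : ℝ) ^ (1 + ((A / (A + 1) : ℝ) - d / 2))⁻¹⌋₊ : ℕ) := by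
        exact_mod_cast ncard_Iavg_inter_Icc_le hdA N
    _ ≤ (Nat.log 2 N + 1 : ℝ) ^ (2 ^ A - 1) *
          (N : ℝ) ^ (1 + ((A / (A + 1) : ℝ) - d / 2))⁻¹ := by
        push_cast
        gcongr
        exact Nat.floor_le (by positivity)
    _ ≤ C * (N : ℝ) ^ ε := hbound N hN
end

section
/- Let c ∈ (0,1) and let ε be any real number with 1 − c < ε < 1. Then there exist a constant C > 0 and N₀ such that for all integers N ≥ N₀ and all real k ≥ c·log₂ N, the number of positive integers x ≤ N that can be written as a product x = m₁·m₂⋯m_⌈k⌉ of ⌈k⌉ integers each at least 2 (equivalently, the number of positive integers x ≤ N with Ω(x) ≥ k) is at most C·N^{ε}. -/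
/-- For `c ∈ (0,1)` and `1 - c < ε < 1`, there are `C > 0` and `N₀` such that
for all `N ≥ N₀` and all real `k ≥ c·log₂ N`, the number of positive integers
`x ≤ N` with `Ω(x) ≥ k` (i.e. `x` is a product of `⌈k⌉` integers each at least
`2`) is at most `C·N^ε`.  Here `Ω(x)` is the number of prime factors of `x`
counted with multiplicity. -/
theorem count_many_factors_le (c ε : ℝ) (hc : c ∈ Set.Ioo (0 : ℝ) 1)
    (hε₁ : 1 - c < ε) (hε₂ : ε < 1) :
    ∃ C : ℝ, 0 < C ∧ ∃ N₀ : ℕ, ∀ N : ℕ, N₀ ≤ N → ∀ k : ℝ,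
      c * Real.logb 2 N ≤ k →
      (({x : ℕ | 1 ≤ x ∧ x ≤ N ∧ k ≤ (x.primeFactorsList.length : ℝ)}.ncard : ℝ))
        ≤ C * (N : ℝ) ^ ε := by
  obtain ⟨hc0, hc1⟩ := hc
  set θ : ℝ := ((1 - ε) / c + 1) / 2 with hθdef
  have hfrac0 : 0 < (1 - ε) / c := div_pos (by linarith) hc0
  have hfrac1 : (1 - ε) / c < 1 := (div_lt_one hc0).mpr (by linarith)
  have hθ0 : 0 < θ := by rw [hθdef]; linarith
  have hθ1 : θ < 1 := by rw [hθdef]; linarith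
  have hθε : 1 - ε < c * θ := by
    have h : (1 - ε) / c < θ := by rw [hθdef]; linarith
    calc 1 - ε = c * ((1 - ε) / c) := by field_simp
      _ < c * θ := mul_lt_mul_of_pos_left h hc0
  set s : ℝ := ε + c * θ with hsdef
  have hs1 : 1 < s := by rw [hsdef]; linarith
  set t : ℝ := (2 : ℝ) ^ θ with htdef
  have ht0 : 0 < t := Real.rpow_pos_of_pos two_pos θ
  have ht1 : 1 < t := Real.one_lt_rpow_iff_of_pos two_pos |>.mpr (Or.inl ⟨one_lt_two, hθ0⟩)
  have hts : t < (2 : ℝ) ^ s := by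
    rw [htdef]
    exact Real.rpow_lt_rpow_left_iff one_lt_two |>.mpr (by linarith)
  have h2s : (0 : ℝ) < (2 : ℝ) ^ s := Real.rpow_pos_of_pos two_pos s
  set a : ℝ := t * ((2 : ℝ) ^ s)⁻¹ with hadef
  have ha0 : 0 < a := mul_pos ht0 (inv_pos.mpr h2s)
  have ha1 : a < 1 := by
    have := (div_lt_one h2s).mpr hts
    rw [hadef, ← div_eq_mul_inv]
    exact this
  have h1a : 0 < 1 - a := by linarith
  -- the completely multiplicative weight
  set g : ℕ → ℝ := fun n => t ^ n.primeFactorsList.length * (((n : ℝ)) ^ s)⁻¹ with hgdef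
  have hg0 : ∀ n, 0 ≤ g n := fun n => by
    simp only [hgdef]
    positivity
  have hg1 : g 1 = 1 := by simp [hgdef]
  have hgmul : ∀ m n, g (m * n) = g m * g n := by
    intro m n
    rcases eq_or_ne m 0 with rfl | hm
    · simp [hgdef, Real.zero_rpow (show s ≠ 0 by linarith)]
    rcases eq_or_ne n 0 with rfl | hn
    · simp [hgdef, Real.zero_rpow (show s ≠ 0 by linarith)]
    · have hΩ : (m * n).primeFactorsList.length
          = m.primeFactorsList.length + n.primeFactorsList.length := by
        have h := ArithmeticFunction.cardFactors_mul hm hn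
        simpa [ArithmeticFunction.cardFactors_apply] using h
      have hmn : ((m * n : ℕ) : ℝ) ^ s = (m : ℝ) ^ s * (n : ℝ) ^ s := by
        push_cast
        exact Real.mul_rpow (Nat.cast_nonneg m) (Nat.cast_nonneg n)
      simp only [hgdef]
      rw [hΩ, pow_add, hmn, mul_inv]
      ring
  set f : ℕ →* ℝ := ⟨⟨g, hg1⟩, hgmul⟩ with hfdef
  have hfval : ∀ n, f n = g n := fun n => rfl
  have hfp : ∀ {p : ℕ}, p.Prime → f p = t * (((p : ℝ)) ^ s)⁻¹ := by
    intro p hp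
    rw [hfval]
    simp only [hgdef]
    rw [Nat.primeFactorsList_prime hp]
    simp
  have hple : ∀ {p : ℕ}, p.Prime → f p ≤ a := by
    intro p hp
    rw [hfp hp, hadef]
    refine mul_le_mul_of_nonneg_left ?_ ht0.le
    refine inv_anti₀ h2s ?_
    exact Real.rpow_le_rpow (by norm_num) (by exact_mod_cast hp.two_le) (by linarith)
  have hfnonneg : ∀ n, 0 ≤ f n := fun n => by rw [hfval]; exact hg0 n
  have hfnorm : ∀ {p : ℕ}, p.Prime → ‖f p‖ < 1 := by
    intro p hp
    rw [Real.norm_eq_abs, abs_of_nonneg (hfnonneg p)]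
    exact lt_of_le_of_lt (hple hp) ha1
  have hsummable : Summable (fun n : ℕ => ((n : ℝ) ^ s)⁻¹) :=
    Real.summable_nat_rpow_inv.mpr hs1
  set T : ℝ := t * ∑' n : ℕ, ((n : ℝ) ^ s)⁻¹ with hTdef
  set B : ℝ := Real.exp (T / (1 - a)) with hBdef
  have hB0 : 0 < B := Real.exp_pos _
  -- uniform bound on the Euler products
  have hprod : ∀ M : ℕ, ∏ p ∈ M.primesBelow, (1 - f p)⁻¹ ≤ B := by
    intro M
    have hstep : ∀ p ∈ M.primesBelow, (1 - f p)⁻¹ ≤ Real.exp (f p / (1 - a)) := by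
      intro p hp
      have hpp := Nat.prime_of_mem_primesBelow hp
      have h1 : 0 ≤ f p := hfnonneg p
      have h2 : f p ≤ a := hple hpp
      have h3 : 0 < 1 - f p := by linarith
      have hexp : 1 + f p / (1 - a) ≤ Real.exp (f p / (1 - a)) := by
        have := Real.add_one_le_exp (f p / (1 - a)); linarith
      have h5 : (1 - f p)⁻¹ ≤ 1 + f p / (1 - a) := by
        rw [← one_div, div_le_iff₀ h3]
        have key : (1 + f p / (1 - a)) * (1 - f p) = 1 + f p * (a - f p) / (1 - a) := by
          field_simp
          ring
        rw [key]
        have : 0 ≤ f p * (a - f p) / (1 - a) :=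
          div_nonneg (mul_nonneg h1 (by linarith)) h1a.le
        linarith
      exact h5.trans hexp
    have hsum : ∑ p ∈ M.primesBelow, f p ≤ T := by
      calc ∑ p ∈ M.primesBelow, f p
          = ∑ p ∈ M.primesBelow, t * ((p : ℝ) ^ s)⁻¹ :=
            Finset.sum_congr rfl fun p hp => hfp (Nat.prime_of_mem_primesBelow hp)
        _ = t * ∑ p ∈ M.primesBelow, ((p : ℝ) ^ s)⁻¹ := by rw [Finset.mul_sum]
        _ ≤ t * ∑' n : ℕ, ((n : ℝ) ^ s)⁻¹ := by
            refine mul_le_mul_of_nonneg_left ?_ ht0.le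
            exact Summable.sum_le_tsum _ (fun i _ => by positivity) hsummable
        _ = T := rfl
    calc ∏ p ∈ M.primesBelow, (1 - f p)⁻¹
        ≤ ∏ p ∈ M.primesBelow, Real.exp (f p / (1 - a)) := by
          refine Finset.prod_le_prod (fun p hp => ?_) hstep
          have h2 : f p ≤ a := hple (Nat.prime_of_mem_primesBelow hp)
          have : 0 < 1 - f p := by linarith
          positivity
      _ = Real.exp (∑ p ∈ M.primesBelow, f p / (1 - a)) := (Real.exp_sum _ _).symm
      _ ≤ B := by
          rw [hBdef]
          apply Real.exp_le_exp.mpr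
          rw [← Finset.sum_div]
          gcongr
  -- uniform bound on partial sums of g over [1, N]
  have hIcc : ∀ N : ℕ, ∑ x ∈ Finset.Icc 1 N, g x ≤ B := by
    intro N
    obtain ⟨hsm, hhs⟩ :=
      EulerProduct.summable_and_hasSum_smoothNumbers_prod_primesBelow_geometric
        (f := f) hfnorm (N + 1)
    have hind : HasSum ((Nat.smoothNumbers (N + 1)).indicator fun n => f n)
        (∏ p ∈ (N + 1).primesBelow, (1 - f p)⁻¹) :=
      hasSum_subtype_iff_indicator.mp hhs
    calc ∑ x ∈ Finset.Icc 1 N, g x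
        = ∑ x ∈ Finset.Icc 1 N,
            (Nat.smoothNumbers (N + 1)).indicator (fun n => f n) x := by
          refine Finset.sum_congr rfl fun x hx => ?_
          rw [Finset.mem_Icc] at hx
          rw [Set.indicator_of_mem, hfval]
          rw [Nat.mem_smoothNumbers]
          refine ⟨by omega, fun p hp => ?_⟩
          have hpd : p ∣ x := Nat.dvd_of_mem_primeFactorsList hp
          have := Nat.le_of_dvd (by omega) hpd
          omega
      _ ≤ ∏ p ∈ (N + 1).primesBelow, (1 - f p)⁻¹ :=
          sum_le_hasSum _
            (fun i _ => Set.indicator_nonneg (fun n _ => hfnonneg n) i) hind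
      _ ≤ B := hprod (N + 1)
  refine ⟨B, hB0, 1, fun N hN k hk => ?_⟩
  have hN0 : 0 < N := hN
  have hNR : (0 : ℝ) < N := by exact_mod_cast hN0
  have hset : {x : ℕ | 1 ≤ x ∧ x ≤ N ∧ k ≤ (x.primeFactorsList.length : ℝ)}
      = ↑((Finset.Icc 1 N).filter fun x => k ≤ (x.primeFactorsList.length : ℝ)) := by
    ext x
    simp [Finset.mem_Icc, and_assoc]
  rw [hset, Set.ncard_coe_finset]
  set Fs := (Finset.Icc 1 N).filter (fun x => k ≤ (x.primeFactorsList.length : ℝ)) with hFs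
  have hterm : ∀ x ∈ Fs, (1 : ℝ) ≤ (t ^ k)⁻¹ * (N : ℝ) ^ s * g x := by
    intro x hx
    rw [hFs, Finset.mem_filter, Finset.mem_Icc] at hx
    obtain ⟨⟨hx1, hxN⟩, hxk⟩ := hx
    have hx0 : (0 : ℝ) < x := by exact_mod_cast hx1
    have hxs : (0 : ℝ) < (x : ℝ) ^ s := Real.rpow_pos_of_pos hx0 _
    have htk : (0 : ℝ) < t ^ k := Real.rpow_pos_of_pos ht0 _
    have h1 : t ^ k ≤ t ^ (x.primeFactorsList.length : ℕ) := by
      rw [← Real.rpow_natCast t]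
      exact Real.rpow_le_rpow_left_iff ht1 |>.mpr hxk
    have h2 : (x : ℝ) ^ s ≤ (N : ℝ) ^ s :=
      Real.rpow_le_rpow hx0.le (by exact_mod_cast hxN) (by linarith)
    have key : t ^ k * (x : ℝ) ^ s ≤ (N : ℝ) ^ s * t ^ x.primeFactorsList.length := by
      calc t ^ k * (x : ℝ) ^ s
          ≤ t ^ x.primeFactorsList.length * (N : ℝ) ^ s :=
            mul_le_mul h1 h2 hxs.le (by positivity)
        _ = (N : ℝ) ^ s * t ^ x.primeFactorsList.length := mul_comm _ _
    simp only [hgdef]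
    have hrw : (t ^ k)⁻¹ * (N : ℝ) ^ s * (t ^ x.primeFactorsList.length * ((x : ℝ) ^ s)⁻¹)
        = ((N : ℝ) ^ s * t ^ x.primeFactorsList.length) / (t ^ k * (x : ℝ) ^ s) := by
      field_simp
    rw [hrw, le_div_iff₀ (by positivity)]
    linarith
  have hmain : (Fs.card : ℝ) ≤ (t ^ k)⁻¹ * (N : ℝ) ^ s * B := by
    have htkpos : (0 : ℝ) < t ^ k := Real.rpow_pos_of_pos ht0 _
    calc (Fs.card : ℝ) = ∑ _x ∈ Fs, (1 : ℝ) := by simp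
      _ ≤ ∑ x ∈ Fs, (t ^ k)⁻¹ * (N : ℝ) ^ s * g x := Finset.sum_le_sum hterm
      _ = (t ^ k)⁻¹ * (N : ℝ) ^ s * ∑ x ∈ Fs, g x := by rw [Finset.mul_sum]
      _ ≤ (t ^ k)⁻¹ * (N : ℝ) ^ s * B := by
          refine mul_le_mul_of_nonneg_left ?_ (by positivity)
          calc ∑ x ∈ Fs, g x
              ≤ ∑ x ∈ Finset.Icc 1 N, g x :=
                Finset.sum_le_sum_of_subset_of_nonneg (Finset.filter_subset _ _)
                  (fun i _ _ => hg0 i)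
            _ ≤ B := hIcc N
  have hexp2 : (t ^ k)⁻¹ * (N : ℝ) ^ s ≤ (N : ℝ) ^ ε := by
    have h1 : (t ^ k)⁻¹ = t ^ (-k) := (Real.rpow_neg ht0.le k).symm
    have h2 : t ^ (-k) ≤ t ^ (-(c * Real.logb 2 N)) :=
      Real.rpow_le_rpow_left_iff ht1 |>.mpr (by linarith)
    have h3 : t ^ (-(c * Real.logb 2 N)) = (N : ℝ) ^ (-(c * θ)) := by
      rw [htdef, ← Real.rpow_mul (by norm_num : (0 : ℝ) ≤ 2)]
      rw [show θ * -(c * Real.logb 2 N) = Real.logb 2 N * -(c * θ) by ring]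
      rw [Real.rpow_mul (by norm_num : (0 : ℝ) ≤ 2)]
      rw [Real.rpow_logb two_pos (by norm_num) hNR]
    have h4 : (N : ℝ) ^ (-(c * θ)) * (N : ℝ) ^ s = (N : ℝ) ^ ε := by
      rw [← Real.rpow_add hNR]
      congr 1
      rw [hsdef]; ring
    calc (t ^ k)⁻¹ * (N : ℝ) ^ s = t ^ (-k) * (N : ℝ) ^ s := by rw [h1]
      _ ≤ t ^ (-(c * Real.logb 2 N)) * (N : ℝ) ^ s :=
          mul_le_mul_of_nonneg_right h2 (by positivity)
      _ = (N : ℝ) ^ ε := by rw [h3, h4]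
  calc (Fs.card : ℝ) ≤ (t ^ k)⁻¹ * (N : ℝ) ^ s * B := hmain
    _ = B * ((t ^ k)⁻¹ * (N : ℝ) ^ s) := by ring
    _ ≤ B * (N : ℝ) ^ ε := mul_le_mul_of_nonneg_left hexp2 hB0.le
end

section
/- Let G be a finite simple graph with a distinguished vertex v, and let G' be a finite simple graph with two distinct vertices v' and w' such that v' and w' are adjacent to each other and each of v', w' is adjacent to every other vertex of G'. Let G'' be the graph obtained by taking the disjoint union of G and G' and identifying v with v'. Then the number of independent sets of G'' containing w' equals b(G,v), and the number of independent sets of G'' not containing w' equals a(G,v) + i(G' − v' − w')·b(G,v), where G' − v' − w' is the induced subgraph of G' on the vertices other than v' and w'. -/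
/-- The number of independent sets of `G` containing the vertex `v`. -/
noncomputable def aCount {V : Type*} (G : SimpleGraph V) (v : V) : ℕ :=
  Nat.card {s : Set V // v ∈ s ∧ ∀ x ∈ s, ∀ y ∈ s, ¬ G.Adj x y}

/-- The number of independent sets of `G` not containing the vertex `v`
(including the empty set). -/
noncomputable def bCount {V : Type*} (G : SimpleGraph V) (v : V) : ℕ :=
  Nat.card {s : Set V // v ∉ s ∧ ∀ x ∈ s, ∀ y ∈ s, ¬ G.Adj x y}

/-- The graph obtained from the disjoint union of `G` and `G'` by identifying
`v ∈ V(G)` with `v' ∈ V(G')`.  Its vertex set is `V ⊕ {x : V' // x ≠ v'}`,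
where `Sum.inl v` plays the role of the merged vertex. -/
def glue {V V' : Type*} (G : SimpleGraph V) (v : V) (G' : SimpleGraph V')
    (v' : V') : SimpleGraph (V ⊕ {x : V' // x ≠ v'}) where
  Adj a b :=
    match a, b with
    | Sum.inl a, Sum.inl b => G.Adj a b
    | Sum.inl a, Sum.inr b => a = v ∧ G'.Adj v' b.1
    | Sum.inr a, Sum.inl b => b = v ∧ G'.Adj v' a.1
    | Sum.inr a, Sum.inr b => G'.Adj a.1 b.1
  symm := by
    refine ⟨?_⟩
    rintro (a | a) (b | b) h
    · exact G.adj_symm h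
    · exact h
    · exact h
    · exact G'.adj_symm h
  loopless := by
    refine ⟨?_⟩
    rintro (a | a) h
    exacts [G.irrefl h, G'.irrefl h]

/-! An independent set of the glued graph is a pair `(A, B)` of independent sets of `G` and of
`G' - v'` subject to one compatibility condition: if `v ∈ A` then `B` avoids the neighbours of
`v'`. As `w'` is adjacent to every other vertex of `G'`, the sets containing `w'` are exactly those
with `v ∉ A` and `B = {w'}`. As `v'` is adjacent to every vertex of `G' - v'`, a set avoiding `w'`
either has `v ∈ A` and `B = ∅`, or has `v ∉ A` and `B` an independent set of `G' - v' - w'`. -/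

open SimpleGraph

section IndependentSets

variable {α β : Type*}

theorem numIndep_eq_card_subset_range {H : SimpleGraph α} {K : SimpleGraph β} (f : H ↪g K) :
    numIndep H =
      Nat.card {t : Set β // t ⊆ Set.range f ∧ ∀ x ∈ t, ∀ y ∈ t, ¬ K.Adj x y} :=
  Nat.card_congr
    { toFun s := ⟨f '' s.1, Set.image_subset_range _ _, by
        rintro _ ⟨x, hx, rfl⟩ _ ⟨y, hy, rfl⟩
        rw [f.map_adj_iff]
        exact s.2 x hx y hy⟩
      invFun t := ⟨f ⁻¹' t.1, fun x hx y hy => by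
        rw [← f.map_adj_iff]
        exact t.2.2 _ hx _ hy⟩
      left_inv s := Subtype.ext (Set.preimage_image_eq _ f.injective)
      right_inv t := Subtype.ext (Set.image_preimage_eq_of_subset t.2.1) }

theorem bCount_eq_numIndep_of_range_eq {H : SimpleGraph α} {K : SimpleGraph β} (f : H ↪g K)
    {u : β} (hf : Set.range f = {u}ᶜ) : bCount K u = numIndep H := by
  simp_rw [numIndep_eq_card_subset_range f, hf, Set.subset_compl_singleton_iff]
  rfl

theorem bCount_induce_eq_numIndep (H : SimpleGraph β) (s : Set β) (u : s) :
    bCount (H.induce s) u = numIndep (H.induce {x ∈ s | x ≠ u}) :=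
  bCount_eq_numIndep_of_range_eq (H.induceHomOfLE fun _ hx => hx.1) <| by
    ext x
    refine ⟨?_, fun hx => ⟨⟨x, x.2, fun h => hx (Subtype.ext h)⟩, rfl⟩⟩
    rintro ⟨y, rfl⟩ h
    exact y.2.2 (congrArg Subtype.val h)

theorem aCount_eq_ncard (H : SimpleGraph α) (u : α) :
    aCount H u = {s : Set α | u ∈ s ∧ ∀ x ∈ s, ∀ y ∈ s, ¬ H.Adj x y}.ncard := rfl

theorem bCount_eq_ncard (H : SimpleGraph α) (u : α) :
    bCount H u = {s : Set α | u ∉ s ∧ ∀ x ∈ s, ∀ y ∈ s, ¬ H.Adj x y}.ncard := rfl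

theorem Set.ncard_preimage_sumEquiv (S : Set (Set α × Set β)) :
    (Set.sumEquiv ⁻¹' S).ncard = S.ncard :=
  Set.ncard_preimage_of_injective_subset_range Set.sumEquiv.injective (by simp)

end IndependentSets

section Glue

variable {V V' : Type*} {G : SimpleGraph V} {v : V} {G' : SimpleGraph V'} {v' : V'}

@[simp] theorem glue_adj_inl_inl {a b : V} :
    (glue G v G' v').Adj (.inl a) (.inl b) ↔ G.Adj a b := Iff.rfl

@[simp] theorem glue_adj_inl_inr {a : V} {b : {x // x ≠ v'}} :
    (glue G v G' v').Adj (.inl a) (.inr b) ↔ a = v ∧ G'.Adj v' b := Iff.rfl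

@[simp] theorem glue_adj_inr_inl {a : {x // x ≠ v'}} {b : V} :
    (glue G v G' v').Adj (.inr a) (.inl b) ↔ b = v ∧ G'.Adj v' a := Iff.rfl

@[simp] theorem glue_adj_inr_inr {a b : {x // x ≠ v'}} :
    (glue G v G' v').Adj (.inr a) (.inr b) ↔ G'.Adj a b := Iff.rfl

theorem glue_indep_iff (s : Set (V ⊕ {x // x ≠ v'})) :
    (∀ x ∈ s, ∀ y ∈ s, ¬ (glue G v G' v').Adj x y) ↔
      (∀ a ∈ Sum.inl ⁻¹' s, ∀ b ∈ Sum.inl ⁻¹' s, ¬ G.Adj a b) ∧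
      (∀ a ∈ Sum.inr ⁻¹' s, ∀ b ∈ Sum.inr ⁻¹' s, ¬ (G'.induce {x | x ≠ v'}).Adj a b) ∧
      (v ∈ Sum.inl ⁻¹' s → ∀ b ∈ Sum.inr ⁻¹' s, ¬ G'.Adj v' b) := by
  simp only [Sum.forall, Set.mem_preimage, glue_adj_inl_inl, glue_adj_inl_inr, glue_adj_inr_inl,
    glue_adj_inr_inr, comap_adj, Function.Embedding.subtype_apply]
  grind

theorem glue_indepSets_inr_mem {w : {x // x ≠ v'}} (hw : ∀ x, x ≠ w.1 → G'.Adj w x) :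
    {s | Sum.inr w ∈ s ∧ ∀ x ∈ s, ∀ y ∈ s, ¬ (glue G v G' v').Adj x y} =
      Set.sumEquiv ⁻¹' ({A | v ∉ A ∧ ∀ a ∈ A, ∀ b ∈ A, ¬ G.Adj a b} ×ˢ {{w}}) := by
  ext s
  rw [Set.mem_preimage, Set.sumEquiv_apply, Set.prodMk_mem_set_prod_eq, Set.mem_singleton_iff,
    Set.mem_ofPred_eq, glue_indep_iff, ← Set.mem_preimage (f := Sum.inr)]
  generalize Sum.inl ⁻¹' s = A, Sum.inr ⁻¹' s = B
  constructor
  · rintro ⟨hwB, hA, hB, hvB⟩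
    refine ⟨⟨fun hv => hvB hv w hwB (hw v' w.2.symm).symm, hA⟩, ?_⟩
    refine Set.eq_singleton_iff_unique_mem.2 ⟨hwB, fun b hb => ?_⟩
    by_contra hbw
    exact hB w hwB b hb (hw b fun h => hbw (Subtype.ext h))
  · rintro ⟨⟨hv, hA⟩, rfl : B = {w}⟩
    refine ⟨rfl, hA, ?_, fun h => absurd h hv⟩
    rintro a rfl b rfl
    exact (G'.induce _).irrefl

theorem glue_indepSets_inr_notMem (hv' : ∀ x, x ≠ v' → G'.Adj v' x) (w : {x // x ≠ v'}) :
    {s | Sum.inr w ∉ s ∧ ∀ x ∈ s, ∀ y ∈ s, ¬ (glue G v G' v').Adj x y} =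
      Set.sumEquiv ⁻¹' ({A | v ∈ A ∧ ∀ a ∈ A, ∀ b ∈ A, ¬ G.Adj a b} ×ˢ {∅} ∪
        {A | v ∉ A ∧ ∀ a ∈ A, ∀ b ∈ A, ¬ G.Adj a b} ×ˢ
          {B | w ∉ B ∧ ∀ a ∈ B, ∀ b ∈ B, ¬ (G'.induce {x | x ≠ v'}).Adj a b}) := by
  ext s
  rw [Set.mem_preimage, Set.sumEquiv_apply, Set.mem_union, Set.prodMk_mem_set_prod_eq,
    Set.prodMk_mem_set_prod_eq, Set.mem_singleton_iff, Set.mem_ofPred_eq, glue_indep_iff,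
    ← Set.mem_preimage (f := Sum.inr)]
  generalize Sum.inl ⁻¹' s = A, Sum.inr ⁻¹' s = B
  constructor
  · rintro ⟨hwB, hA, hB, hvB⟩
    by_cases hv : v ∈ A
    · exact .inl ⟨⟨hv, hA⟩, Set.eq_empty_of_forall_notMem fun b hb => hvB hv b hb (hv' b b.2)⟩
    · exact .inr ⟨⟨hv, hA⟩, hwB, hB⟩
  · rintro (⟨⟨hv, hA⟩, rfl : B = ∅⟩ | ⟨⟨hv, hA⟩, hwB, hB⟩)
    · simpa using hA
    · exact ⟨hwB, hA, hB, fun h => absurd h hv⟩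

theorem aCount_glue_inr {w : {x // x ≠ v'}} (hw : ∀ x, x ≠ w.1 → G'.Adj w x) :
    aCount (glue G v G' v') (.inr w) = bCount G v := by
  rw [aCount_eq_ncard, glue_indepSets_inr_mem hw, Set.ncard_preimage_sumEquiv, Set.ncard_prod,
    Set.ncard_singleton, mul_one, bCount_eq_ncard]

theorem bCount_glue_inr [Finite V] [Finite V'] (hv' : ∀ x, x ≠ v' → G'.Adj v' x)
    (w : {x // x ≠ v'}) :
    bCount (glue G v G' v') (.inr w) =
      aCount G v + bCount (G'.induce {x | x ≠ v'}) w * bCount G v := by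
  rw [bCount_eq_ncard, glue_indepSets_inr_notMem hv', Set.ncard_preimage_sumEquiv,
    Set.ncard_union_eq (Set.disjoint_left.2 fun _ h₁ h₂ => h₂.1.1 h₁.1.1), Set.ncard_prod,
    Set.ncard_prod, Set.ncard_singleton, mul_one, mul_comm, ← aCount_eq_ncard, ← bCount_eq_ncard]
  rfl

end Glue

/-- If `v'` and `w'` are distinct adjacent vertices of `G'`, each adjacent to
every other vertex of `G'`, and `G''` is obtained by identifying `v ∈ V(G)`
with `v' ∈ V(G')` in the disjoint union, then the number of independent sets
of `G''` containing `w'` is `b(G,v)`, and the number of those not containing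
`w'` is `a(G,v) + i(G' - v' - w')·b(G,v)`. -/
theorem glue_indep_counts {V V' : Type*} [Fintype V] [Fintype V']
    (G : SimpleGraph V) (v : V) (G' : SimpleGraph V') (v' w' : V')
    (hne : v' ≠ w') (hadj : G'.Adj v' w')
    (hdom : ∀ x : V', x ≠ v' → x ≠ w' → G'.Adj v' x ∧ G'.Adj w' x) :
    aCount (glue G v G' v') (Sum.inr ⟨w', hne.symm⟩) = bCount G v ∧
    bCount (glue G v G' v') (Sum.inr ⟨w', hne.symm⟩) =
      aCount G v +
        numIndep (G'.induce {x : V' | x ≠ v' ∧ x ≠ w'}) * bCount G v := by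
  have hv' : ∀ x, x ≠ v' → G'.Adj v' x := by
    intro x hx
    obtain rfl | hxw := eq_or_ne x w'
    exacts [hadj, (hdom x hx hxw).1]
  have hw' : ∀ x, x ≠ w' → G'.Adj w' x := by
    intro x hxw
    obtain rfl | hx := eq_or_ne x v'
    exacts [hadj.symm, (hdom x hx hxw).2]
  refine ⟨aCount_glue_inr hw', ?_⟩
  rw [bCount_glue_inr hv', bCount_induce_eq_numIndep]
  rfl
end
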